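/- arXiv:2106.16218 — 4 statements merged into one kernel-verified Lean document; each statement's English description precedes it below -/
import Mathlib

section
/- Let G be a connected graph and X ⊆ V(G) a set of adhesion at most 2. Then the torso G⟦X⟧ is a topological subgraph of G. -/
/-!
Each vertex of `X` is mapped to itself. A torso edge `uw` that is not an edge of `G` comes from a
component `C` of `G - X` with `u, w ∈ N(C)`; as the adhesion is at most 2, `N(C) = {u, w}`, and a
`u`–`w` path through `C` realises the edge. An inner vertex of such a path determines its
component and hence the pair `{u, w}`, so paths of distinct torso edges are internally disjoint.
-/

open SimpleGraph

attribute [local instance] Classical.propDecidable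

/-- `compNbrs G X C` is the set `N_G(C)` of neighbours (necessarily in `X`) of
the connected component `C` of `G - X`. -/
def compNbrs {V : Type} (G : SimpleGraph V) (X : Set V)
    (C : (G.induce (Xᶜ : Set V)).ConnectedComponent) : Set V :=
  {x | x ∈ X ∧ ∃ y : (Xᶜ : Set V),
    (G.induce (Xᶜ : Set V)).connectedComponentMk y = C ∧ G.Adj x ↑y}

/-- The torso `G⟦X⟧` of a vertex set `X`: its vertex set is `X`, and distinct
`v, w ∈ X` are adjacent if `vw ∈ E(G)` or `v, w ∈ N_G(C)` for some connected
component `C` of `G - X`. -/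
def torso {V : Type} (G : SimpleGraph V) (X : Set V) : SimpleGraph X where
  Adj v w := v ≠ w ∧ (G.Adj ↑v ↑w ∨
    ∃ C, (↑v : V) ∈ compNbrs G X C ∧ (↑w : V) ∈ compNbrs G X C)
  symm := by
    constructor
    rintro a b ⟨hab, h | ⟨C, h1, h2⟩⟩
    · exact ⟨hab.symm, Or.inl h.symm⟩
    · exact ⟨hab.symm, Or.inr ⟨C, h2, h1⟩⟩
  loopless := by constructor; rintro a ⟨h, -⟩; exact h rfl

/-- `X` has adhesion at most `k` in `G` if `|N_G(C)| ≤ k` for every connected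
component `C` of `G - X`. -/
def adhesionLE {V : Type} (G : SimpleGraph V) (X : Set V) (k : ℕ) : Prop :=
  ∀ C, (compNbrs G X C).ncard ≤ k

/-- A graph is `k`-connected if it has more than `k` vertices and removing any
set of at most `k - 1` vertices leaves it connected. -/
def IsKConnected {V : Type} [Fintype V] (k : ℕ) (G : SimpleGraph V) : Prop :=
  k < Fintype.card V ∧ ∀ S : Set V, S.ncard ≤ k - 1 → (G.induce (Sᶜ : Set V)).Connected

/-- A proper block of `G`: a set of vertices whose torso is 3-connected and
whose adhesion is at most 2. -/
def IsProperBlock {V : Type} [Fintype V] (G : SimpleGraph V) (B : Set V) : Prop :=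
  IsKConnected 3 (torso G B) ∧ adhesionLE G B 2

/-- A block of `G`: a set `B` of vertices such that either the torso `G⟦B⟧` is
3-connected and `B` has adhesion at most 2, or `G⟦B⟧` is a complete graph of
order 3 and `B` has adhesion at most 2, or `G⟦B⟧` is a complete graph of order
2 and `B` has adhesion at most 1. -/
def IsBlock {V : Type} [Fintype V] (G : SimpleGraph V) (B : Set V) : Prop :=
  (IsKConnected 3 (torso G B) ∧ adhesionLE G B 2) ∨
  (B.ncard = 3 ∧ torso G B = ⊤ ∧ adhesionLE G B 2) ∨
  (B.ncard = 2 ∧ torso G B = ⊤ ∧ adhesionLE G B 1)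

/-- The internal vertices of a walk: its support without the two endpoints. -/
def SimpleGraph.Walk.internals {V : Type} {G : SimpleGraph V} {a b : V}
    (p : G.Walk a b) : List V :=
  p.support.tail.dropLast

/-- `H` is a topological subgraph of `G` if some subdivision of `H` is a
subgraph of `G`: there is an injection `f` of the vertices of `H` into those
of `G`, and for every edge `uv` of `H` a path in `G` from `f u` to `f v`, such
that the internal vertices of these paths avoid the image of `f` and paths of
distinct edges are internally disjoint. -/
def IsTopologicalSubgraph {W V : Type} (H : SimpleGraph W) (G : SimpleGraph V) : Prop :=
  ∃ (f : W → V) (P : ∀ ⦃u w : W⦄, H.Adj u w → G.Walk (f u) (f w)),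
    Function.Injective f ∧
    (∀ ⦃u w : W⦄ (h : H.Adj u w), (P h).IsPath) ∧
    (∀ ⦃u w : W⦄ (h : H.Adj u w), ∀ x ∈ (P h).internals, x ∉ Set.range f) ∧
    (∀ ⦃u w u' w' : W⦄ (h : H.Adj u w) (h' : H.Adj u' w'), s(u, w) ≠ s(u', w') →
      ∀ x ∈ (P h).internals, x ∉ (P h').internals)

namespace SimpleGraph.Walk

variable {V : Type} {G : SimpleGraph V} {a b x : V} {p : G.Walk a b}

lemma mem_support_of_mem_internals (hx : x ∈ p.internals) : x ∈ p.support :=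
  List.mem_of_mem_tail (List.mem_of_mem_dropLast hx)

lemma IsPath.ne_of_mem_internals (hp : p.IsPath) (hx : x ∈ p.internals) : x ≠ a ∧ x ≠ b := by
  unfold internals at hx
  have := hp.support_nodup
  grind [cons_tail_support, getLast_support, List.dropLast_concat_getLast]

end SimpleGraph.Walk

section Torso

variable {V : Type} {G : SimpleGraph V} {X : Set V}

lemma exists_isPath_through_component {C : (G.induce (Xᶜ : Set V)).ConnectedComponent} {u w : V}
    (hu : u ∈ compNbrs G X C) (hw : w ∈ compNbrs G X C) :
    ∃ p : G.Walk u w, p.IsPath ∧ ∀ x ∈ p.internals,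
      ∃ hx : x ∈ (Xᶜ : Set V), (G.induce (Xᶜ : Set V)).connectedComponentMk ⟨x, hx⟩ = C := by
  obtain ⟨-, y, rfl, huy⟩ := hu
  obtain ⟨-, y', hy', hwy'⟩ := hw
  obtain ⟨q⟩ := ConnectedComponent.exact hy'.symm
  let q' := q.map (Embedding.induce (Xᶜ : Set V)).toHom
  let W : G.Walk u w := Walk.cons huy (q'.concat hwy'.symm)
  refine ⟨W.bypass, W.bypass_isPath, fun x hx => ?_⟩
  obtain ⟨hxu, hxw⟩ := W.bypass_isPath.ne_of_mem_internals hx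
  have hxW : x ∈ W.support :=
    W.support_bypass_subset_support (Walk.mem_support_of_mem_internals hx)
  have hxq : x ∈ q'.support := by
    have hW : W.support = u :: (q'.support ++ [w]) :=
      congrArg (u :: ·) (Walk.support_concat q' _)
    simpa [hW, hxu, hxw] using hxW
  obtain ⟨z, hz, rfl⟩ := List.mem_map.1 (Walk.support_map _ q ▸ hxq)
  exact ⟨z.2, ConnectedComponent.sound ⟨(q.takeUntil z hz).reverse⟩⟩

lemma compNbrs_eq_pair [Finite V] (hX : adhesionLE G X 2)
    {C : (G.induce (Xᶜ : Set V)).ConnectedComponent} {u w : V} (huw : u ≠ w)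
    (hu : u ∈ compNbrs G X C) (hw : w ∈ compNbrs G X C) : compNbrs G X C = {u, w} :=
  (Set.eq_of_subset_of_ncard_le (Set.insert_subset hu (Set.singleton_subset_iff.2 hw))
    ((hX C).trans (Set.ncard_pair huw).ge)).symm

lemma exists_isPath_of_torso_adj [Finite V] (hX : adhesionLE G X 2) {u w : X}
    (h : (torso G X).Adj u w) :
    ∃ p : G.Walk u w, p.IsPath ∧ ∀ x ∈ p.internals, ∃ hx : x ∈ (Xᶜ : Set V),
      compNbrs G X ((G.induce (Xᶜ : Set V)).connectedComponentMk ⟨x, hx⟩) = {(u : V), (w : V)} := by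
  obtain ⟨huw, hadj | ⟨C, hu, hw⟩⟩ := h
  · refine ⟨hadj.toWalk, by simpa using Subtype.coe_injective.ne huw, fun x hx => ?_⟩
    simp [Walk.internals] at hx
  · obtain ⟨p, hp, hpC⟩ := exists_isPath_through_component hu hw
    refine ⟨p, hp, fun x hx => ?_⟩
    obtain ⟨hxX, rfl⟩ := hpC x hx
    exact ⟨hxX, compNbrs_eq_pair hX (Subtype.coe_injective.ne huw) hu hw⟩

end Torso

lemma Function.Injective.sym2_mk_eq_of_pair_eq {α β : Type*} {f : α → β} (hf : Function.Injective f)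
    {a b c d : α} (h : ({f a, f b} : Set β) = {f c, f d}) : s(a, b) = s(c, d) := by
  simpa [Sym2.eq_iff, Set.pair_eq_pair_iff, hf.eq_iff] using h

theorem torso_topologicalSubgraph_general {V : Type} [Fintype V] (G : SimpleGraph V)
    (X : Set V) (hX : adhesionLE G X 2) :
    IsTopologicalSubgraph (torso G X) G := by
  choose P hP hPX using fun u w (h : (torso G X).Adj u w) => exists_isPath_of_torso_adj hX h
  refine ⟨Subtype.val, P, Subtype.val_injective, hP, ?_, ?_⟩
  · intro u w h x hx
    obtain ⟨hxX, -⟩ := hPX u w h x hx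
    simpa using hxX
  · intro u w u' w' h h' hne x hx hx'
    obtain ⟨_, hC⟩ := hPX u w h x hx
    obtain ⟨_, hC'⟩ := hPX u' w' h' x hx'
    exact hne (Subtype.val_injective.sym2_mk_eq_of_pair_eq (hC.symm.trans hC'))

/-- If `G` is connected and `X ⊆ V(G)` has adhesion at most 2, then the torso
`G⟦X⟧` is a topological subgraph of `G`. -/
theorem torso_topologicalSubgraph {V : Type} [Fintype V] (G : SimpleGraph V)
    (hG : G.Connected) (X : Set V) (hX : adhesionLE G X 2) :
    IsTopologicalSubgraph (torso G X) G :=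
  torso_topologicalSubgraph_general G X hX
end

section
/- Let G be a graph with pairwise distinct vertices b₁,b₂,b₃. There is a proper block B of G with b₁,b₂,b₃ ∈ B if and only if there exists a vertex b₄ ∈ V(G) \ {b₁,b₂,b₃} such that no set S ⊆ V(G) of cardinality at most 2 separates {b₁,b₂,b₃,b₄}. -/
open SimpleGraph

attribute [local instance] Classical.propDecidable

/-- `S` separates the set `X`: two vertices of `X` outside `S` lie in
different connected components of `G - S`. -/
def SeparatesSet {V : Type} (G : SimpleGraph V) (S : Set V) (X : Set V) : Prop :=
  ∃ x y : (Sᶜ : Set V), (↑x : V) ∈ X ∧ (↑y : V) ∈ X ∧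
    (G.induce (Sᶜ : Set V)).connectedComponentMk x ≠
      (G.induce (Sᶜ : Set V)).connectedComponentMk y

/-!
Forward: let `B` be a proper block and `|S| ≤ 2`. If two vertices of `B - S` lay in different
components of `G - S`, split `B - S` into the part `P` lying in one of these components and the
rest `Q`. A torso edge between `P` and `Q` can only come from a component `D` of `G - B` that
meets `S` and whose neighbourhood `N(D)` consists of the two ends of the edge. There are at most
`|S - B|` such `D`, and since `|P| + |Q| ≥ 4 - |S ∩ B|` they can all be hit by at most `|S - B|`
vertices that exhaust neither `P` nor `Q`; together with `S ∩ B` these form a torso separator of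
size at most two.

Backward: with `W = {b₁, b₂, b₃, b₄}`, take for `B` the vertices `v` such that no set of at most
two vertices separates `W ∪ {v}`. Each vertex outside `B` lies in a pocket: a connected set
disjoint from `W` (hence from `B`) with at most two outer neighbours. Touching pockets uncross
into a pocket, so a largest pocket through a vertex of a component `C` of `G - B` contains `C`,
and `|N(C)| ≤ 2`. For `T ⊆ B` with `|T| ≤ 2`, all of `B - T` lies in one component of `G - T`,
and walks of `G - T` project to walks of the torso avoiding `T`.
-/

variable {V : Type}

theorem SimpleGraph.Reachable.mem_of_adj_closed {α : Type*} {H : SimpleGraph α} {A : Set α}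
    (hA : ∀ ⦃a b⦄, H.Adj a b → a ∈ A → b ∈ A) {x y : α} (h : H.Reachable x y) (hx : x ∈ A) :
    y ∈ A := by
  by_contra hy
  obtain ⟨p⟩ := h
  obtain ⟨d, -, hd, hd'⟩ := p.exists_boundary_dart A hx hy
  exact hd' (hA d.adj hd)

namespace SimpleGraph.ComponentCompl

variable {G : SimpleGraph V} {K : Set V}

theorem exists_walk_support_subset {C : G.ComponentCompl K} {x y : V} (hx : x ∈ C) (hy : y ∈ C) :
    ∃ p : G.Walk x y, ∀ z ∈ p.support, z ∈ C := by
  obtain ⟨hxK, rfl⟩ := hx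
  obtain ⟨hyK, hyC⟩ := hy
  obtain ⟨q⟩ := ConnectedComponent.exact hyC.symm
  refine ⟨q.map (Embedding.induce _).toHom, fun z hz => ?_⟩
  obtain ⟨w, hw, rfl⟩ := List.mem_map.1 (q.support_map (Embedding.induce _).toHom ▸ hz)
  exact ⟨w.2, (ConnectedComponent.sound (q.takeUntil w hw).reachable).symm⟩

theorem connected_induce (C : G.ComponentCompl K) : (G.induce (C : Set V)).Connected := by
  obtain ⟨x, hx⟩ := C.nonempty
  refine induce_connected_of_patches x hx fun hy => ?_
  obtain ⟨p, hp⟩ := exists_walk_support_subset hx hy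
  exact ⟨_, hp, p.start_mem_support, p.end_mem_support,
    p.connected_induce_support.preconnected _ _⟩

theorem mem_of_mem_of_disjoint {L : Set V} {D : G.ComponentCompl K} {C : G.ComponentCompl L}
    (hDL : Disjoint (D : Set V) L) {x y : V} (hxD : x ∈ D) (hyD : y ∈ D) (hxC : x ∈ C) :
    y ∈ C := by
  obtain ⟨p, hp⟩ := exists_walk_support_subset hxD hyD
  have hpL : ∀ z ∈ p.support, z ∈ Lᶜ := fun z hz => Set.disjoint_left.1 hDL (hp z hz)
  obtain ⟨_, rfl⟩ := hxC
  exact ⟨hpL y p.end_mem_support, (ConnectedComponent.sound (p.induce Lᶜ hpL).reachable).symm⟩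

end SimpleGraph.ComponentCompl

theorem exists_transversal {ι α : Type*} [Finite ι] [Finite α] {K : Set ι} (N : ι → Set α)
    {P Q : Set α} (hPQ : Disjoint P Q) (hP : P.Nonempty) (hQ : Q.Nonempty)
    (hNP : ∀ i ∈ K, (N i ∩ P).Nonempty) (hNQ : ∀ i ∈ K, (N i ∩ Q).Nonempty)
    (hcard : K.ncard + 2 ≤ P.ncard + Q.ncard) :
    ∃ T : Set α, T.ncard ≤ K.ncard ∧ (∀ i ∈ K, (N i ∩ T).Nonempty) ∧
      (P \ T).Nonempty ∧ (Q \ T).Nonempty := by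
  have : Nonempty α := ⟨hP.some⟩
  choose! p hpN hpP using hNP
  choose! q hqN hqQ using hNQ
  -- the sets indexed by `K₁` are hit inside `P`, the others inside `Q`
  obtain ⟨K₁, hK₁K, hK₁⟩ := Set.exists_subset_card_eq (min_le_left K.ncard (P.ncard - 1))
  have hK₂ : (K \ K₁).ncard = K.ncard - K₁.ncard := Set.ncard_sdiff hK₁K
  have hp : (p '' K₁).ncard ≤ K₁.ncard := Set.ncard_image_le
  have hq : (q '' (K \ K₁)).ncard ≤ (K \ K₁).ncard := Set.ncard_image_le
  have hP₀ := hP.ncard_pos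
  have hQ₀ := hQ.ncard_pos
  refine ⟨p '' K₁ ∪ q '' (K \ K₁), ?_, fun i hi => ?_, ?_, ?_⟩
  · have := Set.ncard_union_le (p '' K₁) (q '' (K \ K₁))
    omega
  · by_cases hi₁ : i ∈ K₁
    · exact ⟨p i, hpN i hi, Or.inl ⟨i, hi₁, rfl⟩⟩
    · exact ⟨q i, hqN i hi, Or.inr ⟨i, ⟨hi, hi₁⟩, rfl⟩⟩
  · obtain ⟨x, hxP, hx⟩ := Set.exists_mem_notMem_of_ncard_lt_ncard (s := p '' K₁) (t := P)
      (by omega)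
    refine ⟨x, hxP, ?_⟩
    rintro (h | ⟨i, hi, rfl⟩)
    · exact hx h
    · exact Set.disjoint_left.1 hPQ hxP (hqQ i hi.1)
  · obtain ⟨x, hxQ, hx⟩ := Set.exists_mem_notMem_of_ncard_lt_ncard (s := q '' (K \ K₁)) (t := Q)
      (by omega)
    refine ⟨x, hxQ, ?_⟩
    rintro (⟨i, hi, rfl⟩ | h)
    · exact Set.disjoint_left.1 hPQ (hpP i (hK₁K hi)) hxQ
    · exact hx h

section Components

variable {G : SimpleGraph V}

theorem not_separatesSet_iff {S X : Set V} :
    ¬ SeparatesSet G S X ↔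
      ∀ x ∈ X, ∀ (hx : x ∉ S), ∀ y ∈ X, y ∉ S → y ∈ G.componentComplMk hx := by
  constructor
  · intro h x hx hxS y hy hyS
    by_contra hyC
    exact h ⟨⟨x, hxS⟩, ⟨y, hyS⟩, hx, hy, fun e => hyC ⟨hyS, e.symm⟩⟩
  · rintro h ⟨x, y, hx, hy, hne⟩
    obtain ⟨_, e⟩ := h x hx x.2 y hy y.2
    exact hne e.symm

theorem mem_compNbrs_iff {X : Set V} {C : G.ComponentCompl X} {x : V} :
    x ∈ compNbrs G X C ↔ x ∈ X ∧ ∃ y ∈ C, G.Adj x y :=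
  ⟨fun ⟨hx, y, hyC, hxy⟩ => ⟨hx, y, ⟨y.2, hyC⟩, hxy⟩,
    fun ⟨hx, y, ⟨hy, hyC⟩, hxy⟩ => ⟨hx, ⟨y, hy⟩, hyC, hxy⟩⟩

theorem ncard_setOf_inter_nonempty_le [Finite V] (K S : Set V) :
    {C : G.ComponentCompl K | ((C : Set V) ∩ S).Nonempty}.ncard ≤ (S \ K).ncard :=
  calc _ ≤ (Set.range fun s : ↥(S \ K) => G.componentComplMk s.2.2).ncard := by
        refine Set.ncard_le_ncard ?_ (Set.toFinite _)
        rintro C ⟨s, ⟨hsK, hsC⟩, hsS⟩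
        exact ⟨⟨s, hsS, hsK⟩, hsC⟩
    _ ≤ (S \ K).ncard := Finite.card_range_le _

theorem torso_induce_reachable {B : Set V} {T : Set B} {a b : ↥(Tᶜ : Set B)}
    (h : G.Adj ↑↑a ↑↑b ∨ ∃ D, (↑↑a : V) ∈ compNbrs G B D ∧ (↑↑b : V) ∈ compNbrs G B D) :
    ((torso G B).induce (Tᶜ : Set B)).Reachable a b := by
  by_cases hab : a = b
  · exact hab ▸ Reachable.refl a
  · exact Adj.reachable ⟨fun e => hab (Subtype.ext e), h⟩

theorem torso_induce_reachable_of_mem_componentComplMk {B : Set V} {T : Set B}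
    (x y : ↥(Tᶜ : Set B)) (hx : ((x : B) : V) ∉ Subtype.val '' T)
    (hy : ((y : B) : V) ∈ G.componentComplMk hx) :
    ((torso G B).induce (Tᶜ : Set B)).Reachable x y := by
  -- `d` stands for `z` in the torso: `d = z`, or `d` is a neighbour of the component of
  -- `G - B` containing `z`.
  let A : Set ↥(Subtype.val '' T)ᶜ := {z | ∀ d : ↥(Tᶜ : Set B),
    ((d : B) : V) = z ∨
        (∃ D : G.ComponentCompl B, (z : V) ∈ D ∧ ((d : B) : V) ∈ compNbrs G B D) →
      ((torso G B).induce (Tᶜ : Set B)).Reachable x d}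
  have hxA : ⟨_, hx⟩ ∈ A := by
    rintro d (hd | ⟨D, hxD, -⟩)
    · rw [show d = x from Subtype.ext (Subtype.ext hd)]
    · exact absurd (x : B).2 (ComponentCompl.notMem_of_mem hxD)
  obtain ⟨_, hyC⟩ := hy
  refine (ConnectedComponent.exact hyC).symm.mem_of_adj_closed ?_ hxA y (Or.inl rfl)
  intro a b hab ha d hd
  by_cases haB : (a : V) ∈ B
  · have hxa := ha ⟨⟨a, haB⟩, fun h => a.2 ⟨_, h, rfl⟩⟩ (Or.inl rfl)
    refine hxa.trans (torso_induce_reachable ?_)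
    rcases hd with hd | ⟨D, hbD, hdD⟩
    · exact Or.inl (hd ▸ hab)
    · exact Or.inr ⟨D, mem_compNbrs_iff.2 ⟨haB, b, hbD, hab⟩, hdD⟩
  · refine ha d (Or.inr ?_)
    rcases hd with hd | ⟨D, hbD, hdD⟩
    · exact ⟨_, componentComplMk_mem G haB, mem_compNbrs_iff.2
        ⟨(d : B).2, a, componentComplMk_mem G haB, hd ▸ hab.symm⟩⟩
    · exact ⟨D, ComponentCompl.mem_of_adj _ _ hbD haB hab.symm, hdD⟩

end Components

section ProperBlock

variable {G : SimpleGraph V} {B S : Set V}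

theorem IsProperBlock.three_lt_ncard [Fintype V] (hB : IsProperBlock G B) : 3 < B.ncard := by
  simpa only [← Nat.card_eq_fintype_card, Nat.card_coe_set_eq] using hB.1.1

theorem ncard_preimage_val (X : Set V) : (Subtype.val ⁻¹' X : Set B).ncard = (B ∩ X).ncard := by
  rw [← Set.ncard_image_of_injective _ Subtype.val_injective, Subtype.image_preimage_coe]

theorem mem_of_torso_adj [Finite V] {T : Set V} (hadh : adhesionLE G B 2)
    (C₀ : G.ComponentCompl S)
    (hT : ∀ D : G.ComponentCompl B, ((D : Set V) ∩ S).Nonempty →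
      (compNbrs G B D ∩ ((B \ S) ∩ C₀)).Nonempty → (compNbrs G B D ∩ ((B \ S) \ C₀)).Nonempty →
      (compNbrs G B D ∩ T).Nonempty)
    {x y : V} (hxy : x ≠ y) (hxB : x ∈ B) (hyB : y ∈ B) (hx : x ∈ C₀) (hxT : x ∉ T)
    (hyS : y ∉ S) (hyT : y ∉ T)
    (hadj : G.Adj x y ∨ ∃ D, x ∈ compNbrs G B D ∧ y ∈ compNbrs G B D) : y ∈ C₀ := by
  by_contra hy
  obtain hadj | ⟨D, hxD, hyD⟩ := hadj
  · exact hy (ComponentCompl.mem_of_adj x y hx hyS hadj)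
  by_cases hDS : ((D : Set V) ∩ S).Nonempty
  · obtain ⟨t, htD, htT⟩ :=
      hT D hDS ⟨x, hxD, ⟨hxB, ComponentCompl.notMem_of_mem hx⟩, hx⟩ ⟨y, hyD, ⟨hyB, hyS⟩, hy⟩
    refine (hadh D).not_gt
      ((Set.two_lt_ncard_iff (Set.toFinite _)).2 ⟨x, y, t, hxD, hyD, htD, hxy, ?_, ?_⟩)
    · rintro rfl; exact hxT htT
    · rintro rfl; exact hyT htT
  · rw [Set.not_nonempty_iff_eq_empty, ← Set.disjoint_iff_inter_eq_empty] at hDS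
    obtain ⟨-, x', hx'D, hxx'⟩ := mem_compNbrs_iff.1 hxD
    obtain ⟨-, y', hy'D, hyy'⟩ := mem_compNbrs_iff.1 hyD
    have hx' : x' ∈ C₀ :=
      ComponentCompl.mem_of_adj x x' hx (Set.disjoint_left.1 hDS hx'D) hxx'
    exact hy (ComponentCompl.mem_of_adj y' y
      (ComponentCompl.mem_of_mem_of_disjoint hDS hx'D hy'D hx') hyS hyy'.symm)

theorem IsProperBlock.mem_componentComplMk [Fintype V] (hB : IsProperBlock G B)
    (hS : S.ncard ≤ 2) {u v : V} (hu : u ∈ B) (hv : v ∈ B) (huS : u ∉ S) (hvS : v ∉ S) :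
    v ∈ G.componentComplMk huS := by
  have hcard := hB.three_lt_ncard
  obtain ⟨⟨-, hconn⟩, hadh⟩ := hB
  by_contra hv₀
  set C₀ := G.componentComplMk huS
  set K := {D : G.ComponentCompl B | ((D : Set V) ∩ S).Nonempty ∧
    (compNbrs G B D ∩ ((B \ S) ∩ C₀)).Nonempty ∧ (compNbrs G B D ∩ ((B \ S) \ C₀)).Nonempty}
  have hK : K.ncard ≤ (S \ B).ncard :=
    (Set.ncard_le_ncard fun D hD => hD.1).trans (ncard_setOf_inter_nonempty_le B S)
  have hPQ := Set.ncard_inter_add_ncard_sdiff_eq_ncard (B \ S) C₀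
  have hSB := Set.ncard_inter_add_ncard_sdiff_eq_ncard S B
  have hBS := Set.ncard_inter_add_ncard_sdiff_eq_ncard B S
  rw [Set.inter_comm] at hSB
  obtain ⟨T, hTK, hT, ⟨a, haP, haT⟩, ⟨b, hbQ, hbT⟩⟩ :=
    exists_transversal (compNbrs G B) (K := K) (P := (B \ S) ∩ C₀) (Q := (B \ S) \ C₀)
    (Set.disjoint_left.2 fun _ hx hx' => hx'.2 hx.2) ⟨u, ⟨hu, huS⟩, componentComplMk_mem G huS⟩
    ⟨v, ⟨hv, hvS⟩, hv₀⟩ (fun D hD => hD.2.1) (fun D hD => hD.2.2) (by omega)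
  set U : Set B := Subtype.val ⁻¹' S ∪ Subtype.val ⁻¹' T with hU_def
  have hU : U.ncard ≤ 2 := by
    rw [hU_def]
    have := Set.ncard_union_le (Subtype.val ⁻¹' S : Set B) (Subtype.val ⁻¹' T)
    have := Set.ncard_le_ncard (Set.inter_subset_right : B ∩ T ⊆ T)
    rw [ncard_preimage_val, ncard_preimage_val] at *
    omega
  have hreach := (hconn U hU).preconnected
    ⟨⟨a, haP.1.1⟩, fun h => h.elim haP.1.2 haT⟩ ⟨⟨b, hbQ.1.1⟩, fun h => h.elim hbQ.1.2 hbT⟩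
  refine hbQ.2
    (hreach.mem_of_adj_closed (A := {z : ↥(Uᶜ : Set B) | ((z : B) : V) ∈ C₀}) ?_ haP.2)
  rintro z z' ⟨hzz', hadj⟩ hz
  exact mem_of_torso_adj hadh C₀ (fun D h₁ h₂ h₃ => hT D ⟨h₁, h₂, h₃⟩)
    (fun e => hzz' (Subtype.ext e)) z.1.2 z'.1.2 hz (fun h => z.2 (Or.inr h))
    (fun h => z'.2 (Or.inl h)) (fun h => z'.2 (Or.inr h)) hadj

theorem IsProperBlock.not_separatesSet [Fintype V] (hB : IsProperBlock G B) (hS : S.ncard ≤ 2)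
    {X : Set V} (hX : X ⊆ B) : ¬ SeparatesSet G S X :=
  not_separatesSet_iff.2 fun _ hx hxS _ hy hyS =>
    hB.mem_componentComplMk hS (hX hx) (hX hy) hxS hyS

end ProperBlock

def inseparableClosure (G : SimpleGraph V) (W : Set V) : Set V :=
  {v | ∀ S : Set V, S.ncard ≤ 2 → ¬ SeparatesSet G S (insert v W)}

def outerNbrs (G : SimpleGraph V) (D : Set V) : Set V :=
  {y | y ∉ D ∧ ∃ x ∈ D, G.Adj x y}

def IsPocket (G : SimpleGraph V) (W D : Set V) : Prop :=
  (G.induce D).Connected ∧ (outerNbrs G D).ncard ≤ 2 ∧ Disjoint D W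

section InseparableClosure

variable {G : SimpleGraph V} {W : Set V}

theorem outerNbrs_union_subset (D₁ D₂ : Set V) :
    outerNbrs G (D₁ ∪ D₂) ⊆ (outerNbrs G D₁ \ D₂) ∪ (outerNbrs G D₂ \ D₁) := by
  rintro y ⟨hy, x, hx | hx, hxy⟩ <;> simp only [Set.mem_union, not_or] at hy
  · exact Or.inl ⟨⟨hy.1, x, hx, hxy⟩, hy.2⟩
  · exact Or.inr ⟨⟨hy.2, x, hx, hxy⟩, hy.1⟩

theorem componentComplMk_outerNbrs_subset {D : Set V} {d : V} (hd : d ∈ D)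
    (hdN : d ∉ outerNbrs G D) : (G.componentComplMk hdN : Set V) ⊆ D := by
  rintro z ⟨hz, hzC⟩
  refine (ConnectedComponent.exact hzC).symm.mem_of_adj_closed
    (A := {w : ↥(outerNbrs G D)ᶜ | (w : V) ∈ D}) ?_ hd
  intro a b hab ha
  by_contra hb
  exact b.2 ⟨hb, a, ha, hab⟩

theorem IsPocket.union [Finite V] {D₁ D₂ : Set V} {s : V} (h₁ : IsPocket G W D₁)
    (h₂ : IsPocket G W D₂) (hs₁ : s ∈ outerNbrs G D₁) (hs₂ : s ∈ D₂) : IsPocket G W (D₁ ∪ D₂) := by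
  obtain ⟨hc₁, hN₁, hW₁⟩ := h₁
  obtain ⟨hc₂, hN₂, hW₂⟩ := h₂
  obtain ⟨hsD₁, x, hxD₁, hxs⟩ := hs₁
  by_cases hD : (outerNbrs G D₂ ∩ D₁).Nonempty
  · obtain ⟨t, htN₂, htD₁⟩ := hD
    refine ⟨connected_induce_union hc₁.preconnected hc₂.preconnected hxD₁ hs₂ hxs, ?_,
      Set.disjoint_union_left.2 ⟨hW₁, hW₂⟩⟩
    have hsub : outerNbrs G (D₁ ∪ D₂) ⊆ (outerNbrs G D₁ \ {s}) ∪ (outerNbrs G D₂ \ {t}) :=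
      (outerNbrs_union_subset D₁ D₂).trans (Set.union_subset_union
        (Set.sdiff_subset_sdiff_right (Set.singleton_subset_iff.2 hs₂))
        (Set.sdiff_subset_sdiff_right (Set.singleton_subset_iff.2 htD₁)))
    have := (Set.ncard_le_ncard hsub).trans (Set.ncard_union_le _ _)
    have hsN₁ : s ∈ outerNbrs G D₁ := ⟨hsD₁, x, hxD₁, hxs⟩
    rw [Set.ncard_sdiff_singleton_of_mem hsN₁, Set.ncard_sdiff_singleton_of_mem htN₂] at this
    omega
  · have hxD₂ : x ∈ D₂ := by
      by_contra hxD₂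
      exact hD ⟨x, ⟨hxD₂, s, hs₂, hxs.symm⟩, hxD₁⟩
    have hsub : D₁ ⊆ D₂ := fun z hz => by
      refine (hc₁.preconnected ⟨x, hxD₁⟩ ⟨z, hz⟩).mem_of_adj_closed
        (A := {w : ↥D₁ | (w : V) ∈ D₂}) ?_ hxD₂
      intro a b hab ha
      by_contra hb
      exact hD ⟨b, ⟨hb, a, ha, hab⟩, b.2⟩
    rw [Set.union_eq_right.2 hsub]
    exact ⟨hc₂, hN₂, hW₂⟩

theorem subset_inseparableClosure (hW : ∀ S : Set V, S.ncard ≤ 2 → ¬ SeparatesSet G S W) :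
    W ⊆ inseparableClosure G W := fun w hw S hS => by
  rw [Set.insert_eq_of_mem hw]
  exact hW S hS

theorem SeparatesSet.exists_notMem_of_insert {S : Set V} {v : V} (hW : ¬ SeparatesSet G S W)
    (h : SeparatesSet G S (insert v W)) :
    ∃ hv : v ∉ S, ∃ w ∈ W, w ∉ S ∧ w ∉ G.componentComplMk hv := by
  obtain ⟨⟨x, hxS⟩, ⟨y, hyS⟩, hx, hy, hxy⟩ := h
  rcases hx with rfl | hx <;> rcases hy with rfl | hy
  · exact absurd rfl hxy
  · exact ⟨hxS, y, hy, hyS, fun ⟨_, e⟩ => hxy e.symm⟩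
  · exact ⟨hyS, x, hx, hxS, fun ⟨_, e⟩ => hxy e⟩
  · exact absurd ⟨_, _, hx, hy, hxy⟩ hW

theorem exists_isPocket_of_notMem [Finite V]
    (hW : ∀ S : Set V, S.ncard ≤ 2 → ¬ SeparatesSet G S W) {v : V}
    (hv : v ∉ inseparableClosure G W) : ∃ D, IsPocket G W D ∧ v ∈ D := by
  obtain ⟨S, hS, hsep⟩ : ∃ S : Set V, S.ncard ≤ 2 ∧ SeparatesSet G S (insert v W) := by
    simpa [inseparableClosure] using hv
  obtain ⟨hvS, w, hwW, hwS, hw⟩ := hsep.exists_notMem_of_insert (hW S hS)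
  refine ⟨G.componentComplMk hvS, ⟨ComponentCompl.connected_induce _, ?_, ?_⟩,
    componentComplMk_mem G hvS⟩
  · refine (Set.ncard_le_ncard ?_ (Set.toFinite S)).trans hS
    rintro z ⟨hzC, x, hxC, hxz⟩
    by_contra hzS
    exact hzC (ComponentCompl.mem_of_adj x z hxC hzS hxz)
  · refine Set.disjoint_left.2 fun z ⟨hzS, e⟩ hzW => hw ?_
    rw [← e]
    exact not_separatesSet_iff.1 (hW S hS) z hzW hzS w hwW hwS

theorem IsPocket.disjoint_inseparableClosure [Finite V] {D : Set V} (hW₃ : 2 < W.ncard)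
    (hD : IsPocket G W D) : Disjoint D (inseparableClosure G W) := by
  refine Set.disjoint_left.2 fun d hdD hd => ?_
  have hdN : d ∉ outerNbrs G D := fun h => h.1 hdD
  obtain ⟨w, hwW, hwN⟩ := Set.exists_mem_notMem_of_ncard_lt_ncard (hD.2.1.trans_lt hW₃)
  have hw := not_separatesSet_iff.1 (hd _ hD.2.1) d (Set.mem_insert d W) hdN w
    (Set.mem_insert_of_mem d hwW) hwN
  exact Set.disjoint_left.1 hD.2.2 (componentComplMk_outerNbrs_subset hdD hdN hw) hwW

theorem exists_isPocket_superset [Finite V]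
    (hW : ∀ S : Set V, S.ncard ≤ 2 → ¬ SeparatesSet G S W)
    (C : G.ComponentCompl (inseparableClosure G W)) : ∃ D, IsPocket G W D ∧ (C : Set V) ⊆ D := by
  obtain ⟨c, hc⟩ := C.nonempty
  obtain ⟨D, ⟨hD, hcD⟩, hmax⟩ := Set.exists_max_image {D | IsPocket G W D ∧ c ∈ D} Set.ncard
    (Set.toFinite _) (exists_isPocket_of_notMem hW (ComponentCompl.notMem_of_mem hc))
  refine ⟨D, hD, fun y hy => ?_⟩
  by_contra hyD
  obtain ⟨p, hp⟩ := ComponentCompl.exists_walk_support_subset hc hy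
  obtain ⟨d, hd, hd₁, hd₂⟩ := p.exists_boundary_dart D hcD hyD
  obtain ⟨D', hD', hdD'⟩ := exists_isPocket_of_notMem hW
    (ComponentCompl.notMem_of_mem (hp _ (p.dart_snd_mem_support_of_mem_darts hd)))
  have hle := hmax (D ∪ D') ⟨hD.union hD' ⟨hd₂, _, hd₁, d.adj⟩ hdD', Or.inl hcD⟩
  have hlt := Set.ncard_lt_ncard
    ((Set.ssubset_iff_of_subset Set.subset_union_left).2 ⟨_, Or.inr hdD', hd₂⟩)
  omega

theorem adhesionLE_inseparableClosure [Finite V]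
    (hW : ∀ S : Set V, S.ncard ≤ 2 → ¬ SeparatesSet G S W) (hW₃ : 2 < W.ncard) :
    adhesionLE G (inseparableClosure G W) 2 := by
  intro C
  obtain ⟨D, hD, hCD⟩ := exists_isPocket_superset hW C
  refine le_trans (Set.ncard_le_ncard ?_ (Set.toFinite _)) hD.2.1
  intro x hx
  obtain ⟨hxB, y, hyC, hxy⟩ := mem_compNbrs_iff.1 hx
  exact ⟨fun hxD => Set.disjoint_left.1 (hD.disjoint_inseparableClosure hW₃) hxD hxB,
    y, hCD hyC, hxy.symm⟩

theorem torso_inseparableClosure_induce_connected [Finite V]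
    (hW : ∀ S : Set V, S.ncard ≤ 2 → ¬ SeparatesSet G S W) (hW₃ : 2 < W.ncard)
    {T : Set (inseparableClosure G W)} (hT : T.ncard ≤ 2) :
    ((torso G (inseparableClosure G W)).induce Tᶜ).Connected := by
  have hT' : (Subtype.val '' T).ncard ≤ 2 :=
    (Set.ncard_image_of_injective T Subtype.val_injective).trans_le hT
  obtain ⟨w, hwW, hwT⟩ := Set.exists_mem_notMem_of_ncard_lt_ncard (hT'.trans_lt hW₃)
  have hmem (z : ↥(Tᶜ : Set (inseparableClosure G W))) :
      ((z : inseparableClosure G W) : V) ∈ G.componentComplMk hwT :=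
    not_separatesSet_iff.1 (z.1.2 _ hT') w (Set.mem_insert_of_mem _ hwW) hwT _
      (Set.mem_insert _ _) fun h => z.2 (Subtype.val_injective.mem_set_image.1 h)
  refine (connected_iff _).2 ⟨fun x y => ?_,
    ⟨⟨⟨w, subset_inseparableClosure hW hwW⟩, fun h => hwT ⟨_, h, rfl⟩⟩⟩⟩
  obtain ⟨hx, ex⟩ := hmem x
  obtain ⟨hy, ey⟩ := hmem y
  exact torso_induce_reachable_of_mem_componentComplMk x y hx ⟨hy, ey.trans ex.symm⟩

theorem isProperBlock_inseparableClosure [Fintype V]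
    (hW : ∀ S : Set V, S.ncard ≤ 2 → ¬ SeparatesSet G S W) (hW₄ : 4 ≤ W.ncard) :
    IsProperBlock G (inseparableClosure G W) := by
  refine ⟨⟨?_, fun T hT => torso_inseparableClosure_induce_connected hW (by omega) hT⟩,
    adhesionLE_inseparableClosure hW (by omega)⟩
  rw [← Nat.card_eq_fintype_card, Nat.card_coe_set_eq]
  have := Set.ncard_le_ncard (subset_inseparableClosure hW) (Set.toFinite _)
  omega

end InseparableClosure

/-- There is a proper block containing three pairwise distinct vertices
`b₁, b₂, b₃` if and only if there is a fourth vertex `b₄` such that no set of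
at most 2 vertices separates `{b₁, b₂, b₃, b₄}`. -/
theorem properBlock_exists_iff {V : Type} [Fintype V] (G : SimpleGraph V)
    (b₁ b₂ b₃ : V) (h12 : b₁ ≠ b₂) (h13 : b₁ ≠ b₃) (h23 : b₂ ≠ b₃) :
    (∃ B : Set V, IsProperBlock G B ∧ b₁ ∈ B ∧ b₂ ∈ B ∧ b₃ ∈ B) ↔
      (∃ b₄ : V, b₄ ∉ ({b₁, b₂, b₃} : Set V) ∧
        ∀ S : Set V, S.ncard ≤ 2 →
          ¬ SeparatesSet G S {b₁, b₂, b₃, b₄}) := by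
  have h3 : ({b₁, b₂, b₃} : Set V).ncard = 3 :=
    Set.ncard_eq_three.2 ⟨_, _, _, h12, h13, h23, rfl⟩
  constructor
  · rintro ⟨B, hB, hb₁, hb₂, hb₃⟩
    obtain ⟨b₄, hb₄B, hb₄⟩ := Set.exists_mem_notMem_of_ncard_lt_ncard (h3 ▸ hB.three_lt_ncard)
    refine ⟨b₄, hb₄, fun S hS => hB.not_separatesSet hS ?_⟩
    rintro x (rfl | rfl | rfl | rfl) <;> assumption
  · rintro ⟨b₄, hb₄, hW⟩
    have hW₄ : 3 < ({b₁, b₂, b₃, b₄} : Set V).ncard := h3 ▸ Set.ncard_lt_ncard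
      ((Set.ssubset_iff_of_subset (Set.insert_subset_insert (Set.insert_subset_insert
        (Set.singleton_subset_iff.2 (Set.mem_insert _ _))))).2 ⟨b₄, by simp, hb₄⟩)
    have hWB := subset_inseparableClosure hW
    exact ⟨_, isProperBlock_inseparableClosure hW hW₄, hWB (by simp), hWB (by simp),
      hWB (by simp)⟩
end

section
/- Let G be a graph, B a proper block of G, and v ∈ B. Then every path in the torso G⟦B⟧ from v to another vertex of B can be expanded to a path in G with the same endpoints, and internally disjoint paths in G⟦B⟧ expand to internally disjoint paths in G. Consequently, for any three distinct vertices b₁,b₂,b₃ ∈ B and any v ∈ B, there are three paths in G from v to b₁, b₂, b₃ respectively that pairwise intersect only in v. -/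
/-!
A torso edge `vu` that is not an edge of `G` comes from a component `C` of `G - B` with
`v, u ∈ N(C)`; as the adhesion is at most two, `N(C) = {v, u}`, so the edge can be replaced by a
path through `C`. An expansion of a torso path therefore enters a component only if both of its
attachment vertices lie on the torso path, and expansions of torso paths sharing only `v` meet only
in `v`: a common vertex outside `B` would give them two common attachment vertices.

The three paths come from the fan lemma in the 3-connected torso, which is Menger's theorem applied
to `N(v)` and the targets once `v` is detached. Menger's theorem is proved by induction on the
number of edges: either contracting an edge `xy` keeps every `A`–`B` separator large, or some
separator `S` of size `k` contains both `x` and `y`; then no walk from `A` or `B` to its first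
vertex in `S` uses `xy`, and `k` disjoint `A`–`S` and `B`–`S` walks of `G - xy` are glued along `S`.
-/

open SimpleGraph

attribute [local instance] Classical.propDecidable

lemma Set.range_eq_of_injective_of_ncard_le {W : Type*} [Finite W] {k : ℕ} {g : Fin k → W}
    (hg : Function.Injective g) {S : Set W} (hgS : ∀ i, g i ∈ S) (hS : S.ncard ≤ k) :
    Set.range g = S :=
  Set.eq_of_subset_of_ncard_le (Set.range_subset_iff.mpr hgS)
    (by rwa [Set.ncard_range_of_injective hg, Nat.card_eq_fintype_card, Fintype.card_fin])

namespace SimpleGraph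

variable {W : Type*} {T : SimpleGraph W}

namespace Walk

lemma IsPath.append_of_support_inter {u v w : W} {p : T.Walk u v} {q : T.Walk v w}
    (hp : p.IsPath) (hq : q.IsPath) (h : ∀ z ∈ p.support, z ∈ q.support → z = v) :
    (p.append q).IsPath := by
  have hqv : v ∉ q.support.tail := by
    have := hq.support_nodup
    rw [← cons_tail_support q] at this
    exact (List.nodup_cons.mp this).1
  rw [isPath_def, support_append]
  refine List.Nodup.append hp.support_nodup (hq.support_nodup.sublist q.support.tail_sublist) ?_
  intro z hzp hzq
  exact hqv (h z hzp (List.mem_of_mem_tail hzq) ▸ hzq)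

lemma exists_isPath_to_first_mem {a b : W} (p : T.Walk a b) {S : Set W}
    (h : ∃ s ∈ S, s ∈ p.support) :
    ∃ m ∈ S, ∃ q : T.Walk a m, q.IsPath ∧ q.support ⊆ p.support ∧
      ∀ z ∈ q.support, z ∈ S → z = m := by
  suffices ∃ m ∈ S, ∃ q : T.Walk a m, q.support ⊆ p.support ∧ ∀ z ∈ q.support, z ∈ S → z = m by
    obtain ⟨m, hm, q, hqp, hqS⟩ := this
    have hsub := q.support_bypass_subset_support
    exact ⟨m, hm, q.bypass, q.bypass_isPath, List.Subset.trans hsub hqp,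
      fun z hz => hqS z (hsub hz)⟩
  induction p with
  | nil =>
    obtain ⟨s, hs, hsp⟩ := h
    rw [support_nil, List.mem_singleton] at hsp
    exact ⟨_, hsp ▸ hs, nil, by simp, by simp⟩
  | @cons a c b hac p ih =>
    by_cases ha : a ∈ S
    · exact ⟨a, ha, nil, by simp, by simp⟩
    obtain ⟨m, hm, q, hqp, hqS⟩ := ih <| by
      obtain ⟨s, hs, hsp⟩ := h
      rw [support_cons, List.mem_cons] at hsp
      exact ⟨s, hs, hsp.resolve_left fun h => ha (h ▸ hs)⟩
    refine ⟨m, hm, cons hac q, ?_, ?_⟩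
    · simpa using List.subset_cons_of_subset a hqp
    · simp only [support_cons, List.mem_cons, forall_eq_or_imp]
      exact ⟨fun h => absurd h ha, hqS⟩

lemma exists_deleteIncidenceSet_of_notMem_support {v a b : W} (p : T.Walk a b)
    (hv : v ∉ p.support) : ∃ q : (T.deleteIncidenceSet v).Walk a b, q.support = p.support := by
  induction p with
  | nil => exact ⟨nil, rfl⟩
  | @cons a c b hac p ih =>
    simp only [support_cons, List.mem_cons, not_or] at hv
    obtain ⟨q, hq⟩ := ih hv.2
    have hcv : c ≠ v := fun h => hv.2 (h ▸ p.start_mem_support)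
    exact ⟨cons (deleteIncidenceSet_adj.mpr ⟨hac, Ne.symm hv.1, hcv⟩) q, by simp [hq]⟩

end Walk

/-! ### Menger's theorem -/

def Separates (T : SimpleGraph W) (A B S : Set W) : Prop :=
  ∀ ⦃a b : W⦄ (p : T.Walk a b), a ∈ A → b ∈ B → ∃ s ∈ S, s ∈ p.support

def HasDisjointWalks (T : SimpleGraph W) (A B : Set W) (k : ℕ) : Prop :=
  ∃ (a b : Fin k → W) (P : ∀ i, T.Walk (a i) (b i)), (∀ i, a i ∈ A) ∧ (∀ i, b i ∈ B) ∧
    Pairwise fun i j => (P i).support.Disjoint (P j).support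

lemma Separates.symm {A B S : Set W} (h : Separates T A B S) : Separates T B A S :=
  fun _ _ p hb ha => by simpa using h p.reverse ha hb

lemma Separates.eq_of_mem_support {A B S : Set W} (hS : Separates T A B S) {a b m m' : W}
    {p : T.Walk a m} {q : T.Walk b m'} (hp : p.IsPath) (hq : q.IsPath) (ha : a ∈ A) (hb : b ∈ B)
    (hm : m ∈ S) (hm' : m' ∈ S) (hpS : ∀ z ∈ p.support, z ∈ S → z = m)
    (hqS : ∀ z ∈ q.support, z ∈ S → z = m') {z : W} (hzp : z ∈ p.support)
    (hzq : z ∈ q.support) : z = m ∧ z = m' := by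
  by_cases hz : z ∈ S
  · exact ⟨hpS z hzp hz, hqS z hzq hz⟩
  -- otherwise the two initial segments up to `z` form an `A`–`B` walk avoiding `S`
  exfalso
  obtain ⟨s, hs, hsr⟩ := hS ((p.takeUntil z hzp).append (q.takeUntil z hzq).reverse) ha hb
  rw [Walk.support_append, Walk.support_reverse] at hsr
  rcases List.mem_append.mp hsr with hsp | hsq
  · have hsm := hpS s (p.support_takeUntil_subset_support hzp hsp) hs
    exact Walk.endpoint_notMem_support_takeUntil hp hzp (fun h => hz (h ▸ hm)) (hsm ▸ hsp)
  · have hsq := List.mem_reverse.mp (List.mem_of_mem_tail hsq)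
    have hsm := hqS s (q.support_takeUntil_subset_support hzq hsq) hs
    exact Walk.endpoint_notMem_support_takeUntil hq hzq (fun h => hz (h ▸ hm')) (hsm ▸ hsq)

lemma injective_of_pairwise_disjoint_support {ι : Type*} {a b : ι → W}
    {P : ∀ i, T.Walk (a i) (b i)} (hP : Pairwise fun i j => (P i).support.Disjoint (P j).support) :
    Function.Injective b := by
  intro i j hij
  by_contra hne
  exact hP hne (P i).end_mem_support (by rw [hij]; exact (P j).end_mem_support)

lemma HasDisjointWalks.mono {T' : SimpleGraph W} (hTT' : T ≤ T') {A B : Set W} {k : ℕ}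
    (h : HasDisjointWalks T A B k) : HasDisjointWalks T' A B k := by
  obtain ⟨a, b, P, haA, hbB, hP⟩ := h
  exact ⟨a, b, fun i => (P i).mapLe hTT', haA, hbB, by simpa [Walk.support_mapLe_eq_support]⟩

lemma hasDisjointWalks_of_edgeSet_eq_empty [Finite W] (hE : T.edgeSet = ∅) {A B : Set W} {k : ℕ}
    (h : ∀ S, Separates T A B S → k ≤ S.ncard) : HasDisjointWalks T A B k := by
  have hAB : Separates T A B (A ∩ B) := by
    intro a b p ha hb
    cases p with
    | nil => exact ⟨a, ⟨ha, hb⟩, Walk.start_mem_support _⟩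
    | cons hadj _ => exact (Set.eq_empty_iff_forall_notMem.mp hE _ (T.mem_edgeSet.mpr hadj)).elim
  obtain ⟨t, htAB, htk⟩ := Set.exists_subset_card_eq (h _ hAB)
  let e : Fin k ≃ t := (Finite.equivFinOfCardEq (by rwa [Nat.card_coe_set_eq])).symm
  refine ⟨fun i => e i, fun i => e i, fun i => Walk.nil, fun i => (htAB (e i).2).1,
    fun i => (htAB (e i).2).2, fun i j hij z hzi hzj => ?_⟩
  simp only [Walk.support_nil, List.mem_singleton] at hzi hzj
  exact hij (e.injective (Subtype.ext (hzi.symm.trans hzj)))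

lemma HasDisjointWalks.exists_isPath_to_first_mem {A S : Set W} {k : ℕ}
    (h : HasDisjointWalks T A S k) :
    ∃ (a m : Fin k → W) (P : ∀ i, T.Walk (a i) (m i)), (∀ i, a i ∈ A) ∧ (∀ i, m i ∈ S) ∧
      (∀ i, (P i).IsPath) ∧ (∀ i, ∀ z ∈ (P i).support, z ∈ S → z = m i) ∧
      Pairwise fun i j => (P i).support.Disjoint (P j).support := by
  obtain ⟨a, b, Q, haA, hbS, hQ⟩ := h
  choose m hmS P hP hPQ hPS using
    fun i => (Q i).exists_isPath_to_first_mem ⟨b i, hbS i, (Q i).end_mem_support⟩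
  exact ⟨a, m, P, haA, hmS, hP, hPS, fun i j hij _ hzi hzj => hQ hij (hPQ i hzi) (hPQ j hzj)⟩

theorem HasDisjointWalks.of_separates [Finite W] {A B S : Set W} {k : ℕ} (hS : Separates T A B S)
    (hSk : S.ncard ≤ k) (hA : HasDisjointWalks T A S k) (hB : HasDisjointWalks T B S k) :
    HasDisjointWalks T A B k := by
  obtain ⟨a, m, P, haA, hmS, hP, hPS, hPdisj⟩ := hA.exists_isPath_to_first_mem
  obtain ⟨b, t, Q, hbB, htS, hQ, hQS, hQdisj⟩ := hB.exists_isPath_to_first_mem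
  have hm := injective_of_pairwise_disjoint_support hPdisj
  have hrange := Set.range_eq_of_injective_of_ncard_le
    (injective_of_pairwise_disjoint_support hQdisj) htS hSk
  choose σ hσ using fun i => hrange.symm ▸ hmS i
  have hcross : ∀ i j, ∀ z ∈ (P i).support, z ∈ (Q j).support → z = m i ∧ z = t j :=
    fun i j z => hS.eq_of_mem_support (hP i) (hQ j) (haA i) (hbB j) (hmS i) (htS j) (hPS i) (hQS j)
  refine ⟨a, fun i => b (σ i), fun i => (P i).append ((Q (σ i)).reverse.copy (hσ i) rfl), haA,
    fun i => hbB _, fun i j hij z hzi hzj => ?_⟩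
  simp only [Walk.support_append, Walk.support_copy, Walk.support_reverse, List.mem_append]
    at hzi hzj
  replace hzi := hzi.imp_right fun h => List.mem_reverse.mp (List.mem_of_mem_tail h)
  replace hzj := hzj.imp_right fun h => List.mem_reverse.mp (List.mem_of_mem_tail h)
  rcases hzi with hzi | hzi <;> rcases hzj with hzj | hzj
  · exact hPdisj hij hzi hzj
  · obtain ⟨h1, h2⟩ := hcross i _ z hzi hzj
    exact hij (hm (by rw [← h1, h2, hσ]))
  · obtain ⟨h1, h2⟩ := hcross j _ z hzj hzi
    exact hij (hm (by rw [← h1, h2, hσ]))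
  · exact hQdisj (fun h => hij (hm (by rw [← hσ i, ← hσ j, h]))) hzi hzj

section Contraction

noncomputable def mergeVert (x y w : W) : W := if w = y then x else w

/-- The contraction `T / xy`, kept on the vertex type `W`: `y` is merged into `x` and becomes an
isolated vertex. -/
def contractEdge (T : SimpleGraph W) (x y : W) : SimpleGraph W :=
  fromEdgeSet (Sym2.map (mergeVert x y) '' T.edgeSet)

variable {x y : W}

lemma contractEdge_adj {u v : W} :
    (T.contractEdge x y).Adj u v ↔
      u ≠ v ∧ ∃ a b, T.Adj a b ∧ mergeVert x y a = u ∧ mergeVert x y b = v := by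
  simp only [contractEdge, fromEdgeSet_adj, Set.mem_image]
  refine and_comm.trans (and_congr_right fun _ => ⟨?_, ?_⟩)
  · rintro ⟨e, he, hev⟩
    induction e using Sym2.ind with | _ a b => ?_
    rw [Sym2.map_mk, Sym2.eq_iff] at hev
    rcases hev with ⟨ha, hb⟩ | ⟨ha, hb⟩
    exacts [⟨a, b, he, ha, hb⟩, ⟨b, a, he.symm, hb, ha⟩]
  · rintro ⟨a, b, hab, rfl, rfl⟩
    exact ⟨s(a, b), hab, rfl⟩

lemma exists_walk_of_mergeVert_eq (hxy : T.Adj x y) {a a' : W}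
    (h : mergeVert x y a = mergeVert x y a') :
    ∃ Q : T.Walk a a', ∀ w ∈ Q.support, mergeVert x y w = mergeVert x y a := by
  by_cases haa' : a = a'
  · subst haa'
    exact ⟨Walk.nil, by simp⟩
  unfold mergeVert at h ⊢
  by_cases ha : a = y <;> by_cases ha' : a' = y <;> simp only [ha, ha', if_true, if_false] at h
  · exact absurd (ha.trans ha'.symm) haa'
  · subst ha h
    exact ⟨Walk.cons hxy.symm Walk.nil, by simp [hxy.ne]⟩
  · subst ha' h
    exact ⟨Walk.cons hxy Walk.nil, by simp [hxy.ne]⟩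
  · exact absurd h haa'

lemma exists_walk_contractEdge {a b : W} (p : T.Walk a b) :
    ∃ q : (T.contractEdge x y).Walk (mergeVert x y a) (mergeVert x y b),
      q.support ⊆ p.support.map (mergeVert x y) := by
  induction p with
  | nil => exact ⟨Walk.nil, by simp⟩
  | @cons a c b hac p ih =>
    obtain ⟨q, hq⟩ := ih
    by_cases hne : mergeVert x y a = mergeVert x y c
    · exact ⟨q.copy hne.symm rfl, by simpa using List.subset_cons_of_subset _ hq⟩
    · refine ⟨Walk.cons (contractEdge_adj.mpr ⟨hne, a, c, hac, rfl, rfl⟩) q, ?_⟩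
      simpa using List.subset_cons_of_subset _ hq

lemma exists_walk_of_contractEdge_walk (hxy : T.Adj x y) {u v : W}
    (q : (T.contractEdge x y).Walk u v) {a b : W} (ha : mergeVert x y a = u)
    (hb : mergeVert x y b = v) :
    ∃ Q : T.Walk a b, ∀ w ∈ Q.support, mergeVert x y w ∈ q.support := by
  induction q generalizing a with
  | nil =>
    obtain ⟨Q, hQ⟩ := exists_walk_of_mergeVert_eq hxy (ha.trans hb.symm)
    exact ⟨Q, fun w hw => by simp [hQ w hw, ha]⟩
  | cons huv q ih =>
    obtain ⟨-, a₀, b₀, hab₀, ha₀, hb₀⟩ := contractEdge_adj.mp huv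
    obtain ⟨Q₀, hQ₀⟩ := exists_walk_of_mergeVert_eq hxy (ha.trans ha₀.symm)
    obtain ⟨Q, hQ⟩ := ih hb₀ hb
    refine ⟨Q₀.append (Walk.cons hab₀ Q), fun w hw => ?_⟩
    rw [Walk.support_append, Walk.support_cons, List.tail_cons, List.mem_append] at hw
    rcases hw with hw | hw
    · simp [hQ₀ w hw, ha]
    · exact List.mem_cons_of_mem _ (hQ w hw)

lemma ncard_edgeSet_contractEdge_lt [Finite W] (hxy : T.Adj x y) :
    (T.contractEdge x y).edgeSet.ncard < T.edgeSet.ncard := by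
  have hloop : s(x, x) ∈ Sym2.map (mergeVert x y) '' T.edgeSet :=
    ⟨s(x, y), hxy, by simp [mergeVert, hxy.ne]⟩
  calc (T.contractEdge x y).edgeSet.ncard
      ≤ (Sym2.map (mergeVert x y) '' T.edgeSet \ {s(x, x)}).ncard := by
        refine Set.ncard_le_ncard ?_
        rw [contractEdge, edgeSet_fromEdgeSet]
        exact Set.sdiff_subset_sdiff_right (by simp)
    _ < (Sym2.map (mergeVert x y) '' T.edgeSet).ncard := Set.ncard_sdiff_singleton_lt_of_mem hloop
    _ ≤ T.edgeSet.ncard := Set.ncard_image_le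

lemma HasDisjointWalks.of_contractEdge (hxy : T.Adj x y) {A B : Set W} {k : ℕ}
    (h : HasDisjointWalks (T.contractEdge x y) (mergeVert x y '' A) (mergeVert x y '' B) k) :
    HasDisjointWalks T A B k := by
  obtain ⟨u, v, P, huA, hvB, hP⟩ := h
  choose a haA ha using huA
  choose b hbB hb using hvB
  choose Q hQ using fun i => exists_walk_of_contractEdge_walk hxy (P i) (ha i) (hb i)
  exact ⟨a, b, Q, haA, hbB, fun i j hij _ hzi hzj => hP hij (hQ i _ hzi) (hQ j _ hzj)⟩

lemma Separates.preimage_mergeVert {A B S : Set W}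
    (h : Separates (T.contractEdge x y) (mergeVert x y '' A) (mergeVert x y '' B) S) :
    Separates T A B (mergeVert x y ⁻¹' S) := by
  intro a b p ha hb
  obtain ⟨q, hq⟩ := exists_walk_contractEdge (x := x) (y := y) p
  obtain ⟨s, hsS, hsq⟩ := h q ⟨a, ha, rfl⟩ ⟨b, hb, rfl⟩
  obtain ⟨w, hwp, rfl⟩ := List.mem_map.mp (hq hsq)
  exact ⟨w, hsS, hwp⟩

lemma exists_separator_of_contractEdge [Finite W] (hxy : x ≠ y) {A B S' : Set W} {k : ℕ}
    (h : ∀ S, Separates T A B S → k ≤ S.ncard)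
    (hS' : Separates (T.contractEdge x y) (mergeVert x y '' A) (mergeVert x y '' B) S')
    (hS'k : S'.ncard < k) :
    ∃ S, Separates T A B S ∧ x ∈ S ∧ y ∈ S ∧ S.ncard ≤ k := by
  have hpre := hS'.preimage_mergeVert
  have hsub : mergeVert x y ⁻¹' S' ⊆ S' ∪ {y} := fun w hw => by
    by_cases hwy : w = y
    · exact Or.inr hwy
    · exact Or.inl (by simpa [mergeVert, hwy] using hw)
  have hxS' : x ∈ S' := by
    by_contra hxS'
    refine (h _ hpre).not_gt (hS'k.trans_le' (Set.ncard_le_ncard fun w hw => ?_))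
    rcases hsub hw with hw' | rfl
    · exact hw'
    · exact absurd (by simpa [mergeVert] using hw) hxS'
  refine ⟨_, hpre, by simpa [mergeVert, hxy] using hxS', by simpa [mergeVert] using hxS', ?_⟩
  calc (mergeVert x y ⁻¹' S').ncard ≤ (S' ∪ {y}).ncard := Set.ncard_le_ncard hsub
    _ ≤ S'.ncard + 1 := Set.ncard_union_le _ _ |>.trans_eq (by rw [Set.ncard_singleton])
    _ ≤ k := hS'k

lemma Separates.of_deleteEdges {A B S U : Set W} (hS : Separates T A B S) (hxy : x ≠ y)
    (hx : x ∈ S) (hy : y ∈ S) (hU : Separates (T.deleteEdges {s(x, y)}) A S U) :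
    Separates T A B U := by
  intro a b p ha hb
  obtain ⟨m, hmS, q, -, hqp, hqS⟩ := p.exists_isPath_to_first_mem (hS p ha hb)
  -- `q` meets `S` only at its end, so it cannot contain both `x` and `y`
  have hq : ∀ e ∈ q.edges, e ∉ ({s(x, y)} : Set (Sym2 W)) := by
    rintro e he rfl
    exact hxy ((hqS x (q.fst_mem_support_of_mem_edges he) hx).trans
      (hqS y (q.snd_mem_support_of_mem_edges he) hy).symm)
  obtain ⟨u, hu, huq⟩ := hU (q.toDeleteEdges _ hq) ha hmS
  exact ⟨u, hu, hqp (by simpa using huq)⟩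

end Contraction

theorem hasDisjointWalks_of_forall_separates [Finite W] {A B : Set W} {k : ℕ}
    (h : ∀ S, Separates T A B S → k ≤ S.ncard) : HasDisjointWalks T A B k := by
  induction hn : T.edgeSet.ncard using Nat.strong_induction_on generalizing T A B with
  | _ n ih =>
  obtain hE | ⟨e, he⟩ := T.edgeSet.eq_empty_or_nonempty
  · exact hasDisjointWalks_of_edgeSet_eq_empty hE h
  induction e using Sym2.ind with | _ x y => ?_
  have hxy : T.Adj x y := he
  by_cases hcon : ∀ S, Separates (T.contractEdge x y) (mergeVert x y '' A) (mergeVert x y '' B) S →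
      k ≤ S.ncard
  · exact (ih _ (hn ▸ ncard_edgeSet_contractEdge_lt hxy) hcon rfl).of_contractEdge hxy
  push Not at hcon
  obtain ⟨S', hS', hS'k⟩ := hcon
  obtain ⟨S, hS, hxS, hyS, hSk⟩ := exists_separator_of_contractEdge hxy.ne h hS' hS'k
  have hdel : (T.deleteEdges {s(x, y)}).edgeSet.ncard < n := by
    rw [edgeSet_deleteEdges, ← hn]
    exact Set.ncard_sdiff_singleton_lt_of_mem he
  have hle := T.deleteEdges_le {s(x, y)}
  refine HasDisjointWalks.of_separates hS hSk ?_ ?_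
  · exact (ih _ hdel (fun U hU => h U (hS.of_deleteEdges hxy.ne hxS hyS hU)) rfl).mono hle
  · exact (ih _ hdel (fun U hU => h U (hS.symm.of_deleteEdges hxy.ne hxS hyS hU).symm) rfl).mono hle

/-! ### The fan lemma -/

lemma le_ncard_of_separates_neighborSet [Finite W] {k : ℕ}
    (hT : ∀ S : Set W, S.ncard ≤ k - 1 → (T.induce Sᶜ).Connected) {v : W} {C : Set W}
    (hvC : v ∉ C) (hCk : C.ncard ≤ k) {S : Set W}
    (hS : Separates (T.deleteIncidenceSet v) (T.neighborSet v) C S) : C.ncard ≤ S.ncard := by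
  by_contra! hlt
  obtain ⟨b, hbC, hbS⟩ := Set.exists_mem_notMem_of_ncard_lt_ncard hlt
  have hbv : b ≠ v := fun h => hvC (h ▸ hbC)
  have hSv : (S \ {v}).ncard ≤ k - 1 := by
    have := Set.ncard_sdiff_singleton_le S v
    omega
  obtain ⟨p⟩ := (hT _ hSv).preconnected ⟨v, by simp⟩ ⟨b, by simp [hbS]⟩
  obtain ⟨q, hqp⟩ : ∃ q : T.Walk v b, q.support = p.support.map Subtype.val :=
    ⟨p.map (Embedding.induce _).toHom, Walk.support_map _ _⟩
  have hq : ∀ z ∈ q.bypass.support, z ∉ S \ {v} := fun z hz => by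
    have hzq := q.support_bypass_subset_support hz
    rw [hqp] at hzq
    obtain ⟨z', -, rfl⟩ := List.mem_map.mp hzq
    exact z'.2
  obtain ⟨w, hvw, r, hr⟩ := Walk.exists_eq_cons_of_ne hbv.symm q.bypass
  have hrv : v ∉ r.support := ((Walk.cons_isPath_iff _ _).mp (hr ▸ q.bypass_isPath)).2
  obtain ⟨r', hr'⟩ := r.exists_deleteIncidenceSet_of_notMem_support hrv
  obtain ⟨s, hsS, hsr⟩ := hS r' hvw hbC
  rw [hr'] at hsr
  exact hq s (by rw [hr]; exact List.mem_cons_of_mem _ hsr) ⟨hsS, fun h => hrv (h ▸ hsr)⟩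

theorem exists_fan [Finite W] {k : ℕ}
    (hT : ∀ S : Set W, S.ncard ≤ k - 1 → (T.induce Sᶜ).Connected) (v : W) {c : Fin k → W}
    (hc : Function.Injective c) :
    ∃ P : ∀ i, T.Walk v (c i), (∀ i, (P i).IsPath) ∧
      Pairwise fun i j => ∀ z ∈ (P i).support, z ∈ (P j).support → z = v := by
  set C := Set.range c \ {v}
  have hCk : C.ncard ≤ k := (Set.ncard_le_ncard Set.sdiff_subset).trans_eq
    (by rw [Set.ncard_range_of_injective hc, Nat.card_eq_fintype_card, Fintype.card_fin])
  obtain ⟨a, b, Q, haN, hbC, hQ⟩ := hasDisjointWalks_of_forall_separates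
    fun S => le_ncard_of_separates_neighborSet hT (fun h => h.2 rfl) hCk (S := S)
  have hb := Set.range_eq_of_injective_of_ncard_le (injective_of_pairwise_disjoint_support hQ)
    hbC le_rfl
  have hroute : ∀ i, ∃ P : T.Walk v (c i), P.IsPath ∧
      ∀ z ∈ P.support, z ≠ v → ∃ j, b j = c i ∧ z ∈ (Q j).support := by
    intro i
    by_cases hci : c i = v
    · exact ⟨Walk.nil.copy rfl hci.symm, by simp, by simp⟩
    have hciC : c i ∈ C := ⟨Set.mem_range_self i, hci⟩
    rw [← hb] at hciC
    obtain ⟨j, hj⟩ := hciC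
    have hvaj : T.Adj v (a j) := haN j
    obtain ⟨R, hR⟩ : ∃ R : T.Walk v (c i), R.support = v :: (Q j).support :=
      ⟨(Walk.cons hvaj ((Q j).mapLe (T.deleteIncidenceSet_le v))).copy rfl hj,
        by rw [Walk.support_copy, Walk.support_cons, Walk.support_mapLe_eq_support]⟩
    refine ⟨R.bypass, R.bypass_isPath, fun z hz hzv => ⟨j, hj, ?_⟩⟩
    have hzR := R.support_bypass_subset_support hz
    rw [hR, List.mem_cons] at hzR
    exact hzR.resolve_left hzv
  choose P hP hPQ using hroute
  refine ⟨P, hP, fun i i' hii' z hz hz' => by_contra fun hzv => ?_⟩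
  obtain ⟨j, hj, hzj⟩ := hPQ i z hz hzv
  obtain ⟨j', hj', hzj'⟩ := hPQ i' z hz' hzv
  obtain rfl : j = j' := by_contra fun hjj' => hQ hjj' hzj hzj'
  exact hii' (hc (hj.symm.trans hj'))

end SimpleGraph

/-! ### Expanding torso paths -/

section Expansion

variable {V : Type} {G : SimpleGraph V} {B : Set V}

/-- `q` is routed through `X`: it meets `B` only inside `X`, and every component `C` of `G - B`
that it enters has at least two attachment vertices `N(C)`, all of them in `X`. -/
def RoutedThrough (G : SimpleGraph V) (B X : Set V) {a b : V} (q : G.Walk a b) : Prop :=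
  (∀ y ∈ q.support, y ∈ B → y ∈ X) ∧
    ∀ y : ↥Bᶜ, ↑y ∈ q.support →
      compNbrs G B ((G.induce Bᶜ).connectedComponentMk y) ⊆ X ∧
        (compNbrs G B ((G.induce Bᶜ).connectedComponentMk y)).Nontrivial

namespace RoutedThrough

variable {X Y : Set V} {a b c : V}

lemma mono {q : G.Walk a b} (h : RoutedThrough G B X q) (hXY : X ⊆ Y) : RoutedThrough G B Y q :=
  ⟨fun y hy hyB => hXY (h.1 y hy hyB), fun y hy => (h.2 y hy).imp_left (·.trans hXY)⟩

lemma append {q : G.Walk a b} {q' : G.Walk b c} (h : RoutedThrough G B X q)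
    (h' : RoutedThrough G B X q') : RoutedThrough G B X (q.append q') := by
  have hmem := fun y => (Walk.mem_support_append_iff (t := y) q q').mp
  exact ⟨fun y hy => (hmem y hy).elim (h.1 y) (h'.1 y),
    fun y hy => (hmem _ hy).elim (h.2 y) (h'.2 y)⟩

/-- A vertex outside `B` shared by the two walks would give two common attachment vertices. -/
lemma eq_of_mem_support {a' b' : V} {q : G.Walk a b} {q' : G.Walk a' b'}
    (h : RoutedThrough G B X q) (h' : RoutedThrough G B Y q') {x : V}
    (hXY : ∀ z ∈ X, z ∈ Y → z = x) {z : V} (hz : z ∈ q.support) (hz' : z ∈ q'.support) :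
    z = x := by
  by_cases hzB : z ∈ B
  · exact hXY z (h.1 z hz hzB) (h'.1 z hz' hzB)
  obtain ⟨hNX, u, hu, w, hw, huw⟩ := h.2 ⟨z, hzB⟩ hz
  have hNY := (h'.2 ⟨z, hzB⟩ hz').1
  exact absurd ((hXY u (hNX hu) (hNY hu)).trans (hXY w (hNX hw) (hNY hw)).symm) huw

end RoutedThrough

lemma exists_isPath_through_component_s12 {C : (G.induce Bᶜ).ConnectedComponent} {v u : V}
    (hv : v ∈ compNbrs G B C) (hu : u ∈ compNbrs G B C) (hvu : v ≠ u) :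
    ∃ d : G.Walk v u, d.IsPath ∧ (∀ y ∈ d.support, y ∈ B → y = v ∨ y = u) ∧
      ∀ y : ↥Bᶜ, ↑y ∈ d.support → (G.induce Bᶜ).connectedComponentMk y = C := by
  obtain ⟨hvB, yv, rfl, hvyv⟩ := hv
  obtain ⟨huB, yu, hyu, huyu⟩ := hu
  obtain ⟨r⟩ := ConnectedComponent.exact hyu.symm
  obtain ⟨r', hr'⟩ : ∃ r' : G.Walk yv yu, r'.support = r.bypass.support.map Subtype.val :=
    ⟨r.bypass.map (Embedding.induce Bᶜ).toHom, Walk.support_map _ _⟩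
  obtain ⟨d, hd⟩ : ∃ d : G.Walk v u, d.support = v :: (r.bypass.support.map Subtype.val ++ [u]) :=
    ⟨Walk.cons hvyv (r'.concat huyu.symm),
      by rw [Walk.support_cons, Walk.support_concat, hr']⟩
  have hrB : ∀ y ∈ r.bypass.support.map Subtype.val, y ∉ B := fun y hy => by
    obtain ⟨y', -, rfl⟩ := List.mem_map.mp hy
    exact y'.2
  refine ⟨d, ?_, fun y hy hyB => ?_, fun y hy => ?_⟩
  · rw [Walk.isPath_def, hd, List.nodup_cons, List.nodup_append]
    refine ⟨?_, r.bypass_isPath.support_nodup.map Subtype.val_injective, List.nodup_singleton u,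
      ?_⟩
    · rw [List.mem_append, List.mem_singleton, not_or]
      exact ⟨fun h => hrB v h hvB, hvu⟩
    · rintro a ha b hb rfl
      exact hrB a ha (List.mem_singleton.mp hb ▸ huB)
  · rw [hd, List.mem_cons, List.mem_append, List.mem_singleton] at hy
    rcases hy with hy | hy | hy
    exacts [Or.inl hy, absurd hyB (hrB y hy), Or.inr hy]
  · rw [hd, List.mem_cons, List.mem_append, List.mem_singleton] at hy
    have hyr : ↑y ∈ r.bypass.support.map Subtype.val :=
      hy.resolve_left (fun h => y.2 (h ▸ hvB)) |>.resolve_right (fun h => y.2 (h ▸ huB))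
    obtain ⟨y', hy', hyy'⟩ := List.mem_map.mp hyr
    obtain rfl := Subtype.ext hyy'
    exact ConnectedComponent.sound (r.bypass.takeUntil y' hy').reachable.symm

lemma exists_routedThrough_of_torso_adj [Finite V] (hadh : adhesionLE G B 2) {v u : B}
    (h : (torso G B).Adj v u) : ∃ d : G.Walk v u, d.IsPath ∧ RoutedThrough G B {↑v, ↑u} d := by
  have hvu : (v : V) ≠ u := fun e => h.1 (Subtype.ext e)
  rcases h.2 with hadj | ⟨C, hvC, huC⟩
  · refine ⟨Walk.cons hadj Walk.nil, by simp [hvu], fun y hy _ => by simpa using hy, fun y hy => ?_⟩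
    simp only [Walk.support_cons, Walk.support_nil, List.mem_cons,
      List.not_mem_nil, or_false] at hy
    exact absurd (hy.elim (· ▸ v.2) (· ▸ u.2)) y.2
  obtain ⟨d, hd, hdB, hdC⟩ := exists_isPath_through_component_s12 hvC huC hvu
  have hN : compNbrs G B C = {↑v, ↑u} := (Set.eq_of_subset_of_ncard_le
    (Set.insert_subset_iff.mpr ⟨hvC, Set.singleton_subset_iff.mpr huC⟩)
    (by rw [Set.ncard_pair hvu]; exact hadh C)).symm
  refine ⟨d, hd, hdB, fun y hy => ?_⟩
  rw [hdC y hy, hN]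
  exact ⟨subset_rfl, Set.nontrivial_pair hvu⟩

def IsExpansion {v w : B} (p : (torso G B).Walk v w) (q : G.Walk v w) : Prop :=
  q.IsPath ∧ (p.support.map Subtype.val).Sublist q.support ∧
    RoutedThrough G B {x | x ∈ p.support.map Subtype.val} q

theorem exists_isExpansion [Finite V] (hadh : adhesionLE G B 2) {v w : B}
    (p : (torso G B).Walk v w) (hp : p.IsPath) : ∃ q, IsExpansion p q := by
  induction p with
  | @nil v =>
    refine ⟨Walk.nil, Walk.IsPath.nil, by simp, fun y hy _ => by simpa using hy, fun y hy => ?_⟩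
    rw [Walk.support_nil, List.mem_singleton] at hy
    exact absurd (hy ▸ v.2) y.2
  | @cons v u w h p ih =>
    rw [Walk.cons_isPath_iff] at hp
    obtain ⟨q, hq, hpq, hqX⟩ := ih hp.1
    obtain ⟨d, hd, hdX⟩ := exists_routedThrough_of_torso_adj hadh h
    have hdq : ∀ z ∈ d.support, z ∈ q.support → z = u := fun z hz hz' => by
      refine hdX.eq_of_mem_support hqX (fun y hy hy' => ?_) hz hz'
      rcases hy with rfl | rfl
      · exact absurd ((List.mem_map_of_injective Subtype.val_injective).mp hy') hp.2
      · rfl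
    refine ⟨d.append q, hd.append_of_support_inter hq hdq, ?_,
      (hdX.mono ?_).append (hqX.mono ?_)⟩
    · rw [Walk.support_cons, List.map_cons, Walk.support_append_eq_support_dropLast_append]
      refine List.Sublist.append (l₁ := [↑v]) (List.singleton_sublist.mpr ?_) hpq
      obtain ⟨_, _, _, rfl⟩ := Walk.exists_eq_cons_of_ne (fun e => h.1 (Subtype.ext e)) d
      rw [Walk.support_cons, List.dropLast_cons_of_ne_nil (Walk.support_ne_nil _)]
      exact List.mem_cons_self
    · rintro z (rfl | rfl)
      · simp
      · simp [p.start_mem_support]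
    · intro z hz
      simp only [Walk.support_cons, List.map_cons, Set.mem_ofPred_eq, List.mem_cons]
      exact Or.inr hz

lemma IsExpansion.eq_of_mem_support {v w w' : B} {p : (torso G B).Walk v w}
    {p' : (torso G B).Walk v w'} {q : G.Walk v w} {q' : G.Walk v w'} (h : IsExpansion p q)
    (h' : IsExpansion p' q') (hpp' : ∀ x ∈ p.support, x ∈ p'.support → x = v) {z : V}
    (hz : z ∈ q.support) (hz' : z ∈ q'.support) : z = v := by
  refine h.2.2.eq_of_mem_support h'.2.2 (fun y hy hy' => ?_) hz hz'
  obtain ⟨x, hx, rfl⟩ := List.mem_map.mp hy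
  rw [hpp' x hx ((List.mem_map_of_injective Subtype.val_injective).mp hy')]

end Expansion

theorem properBlock_path_expansion_general {V : Type} [Fintype V] (G : SimpleGraph V)
    (B : Set V) (hB : IsProperBlock G B) :
    (∀ (v w : B) (p : (torso G B).Walk v w), p.IsPath →
      ∃ q : G.Walk ↑v ↑w, q.IsPath ∧
        (p.support.map (fun x : B => (x : V))).Sublist q.support) ∧
    (∀ (v w₁ w₂ : B) (p₁ : (torso G B).Walk v w₁) (p₂ : (torso G B).Walk v w₂),
      p₁.IsPath → p₂.IsPath →
      (∀ x : B, x ∈ p₁.support → x ∈ p₂.support → x = v) →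
      ∃ (q₁ : G.Walk ↑v ↑w₁) (q₂ : G.Walk ↑v ↑w₂), q₁.IsPath ∧ q₂.IsPath ∧
        (p₁.support.map (fun x : B => (x : V))).Sublist q₁.support ∧
        (p₂.support.map (fun x : B => (x : V))).Sublist q₂.support ∧
        (∀ y : V, y ∈ q₁.support → y ∈ q₂.support → y = (v : V))) ∧
    (∀ v b₁ b₂ b₃ : B, b₁ ≠ b₂ → b₁ ≠ b₃ → b₂ ≠ b₃ →
      ∃ (P₁ : G.Walk ↑v ↑b₁) (P₂ : G.Walk ↑v ↑b₂) (P₃ : G.Walk ↑v ↑b₃),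
        P₁.IsPath ∧ P₂.IsPath ∧ P₃.IsPath ∧
        (∀ y : V, y ∈ P₁.support → y ∈ P₂.support → y = (v : V)) ∧
        (∀ y : V, y ∈ P₁.support → y ∈ P₃.support → y = (v : V)) ∧
        (∀ y : V, y ∈ P₂.support → y ∈ P₃.support → y = (v : V))) := by
  obtain ⟨⟨-, hconn⟩, hadh⟩ := hB
  choose q hq using fun (v w : B) (p : (torso G B).Walk v w) (hp : p.IsPath) =>
    exists_isExpansion hadh p hp
  refine ⟨fun v w p hp => ⟨q v w p hp, (hq v w p hp).1, (hq v w p hp).2.1⟩,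
    fun v w₁ w₂ p₁ p₂ hp₁ hp₂ hshare => ?_, fun v b₁ b₂ b₃ h₁₂ h₁₃ h₂₃ => ?_⟩
  · have h₁ := hq v w₁ p₁ hp₁
    have h₂ := hq v w₂ p₂ hp₂
    exact ⟨_, _, h₁.1, h₂.1, h₁.2.1, h₂.2.1, fun y => h₁.eq_of_mem_support h₂ hshare⟩
  · have hb : Function.Injective ![b₁, b₂, b₃] := by
      intro i j hij
      fin_cases i <;> fin_cases j <;> simp_all [eq_comm]
    obtain ⟨P, hP, hPP⟩ := exists_fan hconn v hb
    have h := fun i => hq v _ (P i) (hP i)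
    exact ⟨_, _, _, (h 0).1, (h 1).1, (h 2).1,
      fun y => (h 0).eq_of_mem_support (h 1) (hPP (by decide)),
      fun y => (h 0).eq_of_mem_support (h 2) (hPP (by decide)),
      fun y => (h 1).eq_of_mem_support (h 2) (hPP (by decide))⟩

/-- **Path expansion in proper blocks.** Let `B` be a proper block of a
connected graph `G`. (1) Every path in the torso `G⟦B⟧` expands to a path in
`G` with the same endpoints (visiting the vertices of the torso path in
order). (2) Two internally disjoint torso paths starting at a common vertex
expand to paths in `G` intersecting only in that vertex. (3) Consequently, for
any `v ∈ B` and pairwise distinct `b₁, b₂, b₃ ∈ B`, there are paths in `G`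
from `v` to `b₁, b₂, b₃` that pairwise intersect only in `v`. -/
theorem properBlock_path_expansion {V : Type} [Fintype V] (G : SimpleGraph V)
    (hG : G.Connected) (B : Set V) (hB : IsProperBlock G B) :
    (∀ (v w : B) (p : (torso G B).Walk v w), p.IsPath →
      ∃ q : G.Walk ↑v ↑w, q.IsPath ∧
        (p.support.map (fun x : B => (x : V))).Sublist q.support) ∧
    (∀ (v w₁ w₂ : B) (p₁ : (torso G B).Walk v w₁) (p₂ : (torso G B).Walk v w₂),
      p₁.IsPath → p₂.IsPath →
      (∀ x : B, x ∈ p₁.support → x ∈ p₂.support → x = v) →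
      ∃ (q₁ : G.Walk ↑v ↑w₁) (q₂ : G.Walk ↑v ↑w₂), q₁.IsPath ∧ q₂.IsPath ∧
        (p₁.support.map (fun x : B => (x : V))).Sublist q₁.support ∧
        (p₂.support.map (fun x : B => (x : V))).Sublist q₂.support ∧
        (∀ y : V, y ∈ q₁.support → y ∈ q₂.support → y = (v : V))) ∧
    (∀ v b₁ b₂ b₃ : B, b₁ ≠ b₂ → b₁ ≠ b₃ → b₂ ≠ b₃ →
      ∃ (P₁ : G.Walk ↑v ↑b₁) (P₂ : G.Walk ↑v ↑b₂) (P₃ : G.Walk ↑v ↑b₃),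
        P₁.IsPath ∧ P₂.IsPath ∧ P₃.IsPath ∧
        (∀ y : V, y ∈ P₁.support → y ∈ P₂.support → y = (v : V)) ∧
        (∀ y : V, y ∈ P₁.support → y ∈ P₃.support → y = (v : V)) ∧
        (∀ y : V, y ∈ P₂.support → y ∈ P₃.support → y = (v : V))) :=
  properBlock_path_expansion_general G B hB
end

section
/- Let T be a finite tree and B ⊆ V(T) with |B| ≤ 3. Then T has a rooted tree decomposition (T*, β*) with B ⊆ β*(r*) for the root r*, of height at most 2·log₂|T|, width at most 3, and adhesion at most 3, such that additionally |β*(r*) \ B| ≤ 1. -/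
open SimpleGraph

/-- `(T', β)` is a tree decomposition of `G`: `T'` is a tree, every vertex of
`G` appears in a nonempty set of bags that is connected in `T'`, and every
edge of `G` is contained in some bag. -/
def IsTreeDecomp {V ι : Type} (G : SimpleGraph V) (T' : SimpleGraph ι)
    (β : ι → Set V) : Prop :=
  T'.IsTree ∧
  (∀ v : V, (∃ t, v ∈ β t) ∧ (T'.induce {t : ι | v ∈ β t}).Connected) ∧
  (∀ ⦃u v : V⦄, G.Adj u v → ∃ t, u ∈ β t ∧ v ∈ β t)

/-!
The decomposition is built top-down. A piece of the recursion is a vertex set `S` still to be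
covered together with the set `B` of at most three vertices through which it hangs below its
parent bag. If `|S| ≤ 1`, the single bag `S ∪ B` will do. Otherwise, if `|B| ≤ 2`, take a centroid
`c` of `S` in `T`; if `|B| = 3`, take a median `c` of `B`. The root bag is `B ∪ {c}`, and each
component `C` of `S - c` becomes a child piece with boundary `N(C) ⊆ B ∪ {c}`. A centroid halves
`S` and leaves at most `|B| + 1 ≤ 3` boundary vertices; a median does not shrink `S` but leaves at
most one vertex of `B` per component of `T - c`, so a child boundary has at most two vertices and
the next step halves. Every two levels thus halve `|S|`, which gives height `2 log₂ |T|`.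
-/

/-- A rooted tree on `ι` given by parent pointers; `depth` decreases towards the root, which
rules out cycles. -/
structure ParentTree (ι : Type*) where
  root : ι
  parent : ι → ι
  depth : ι → ℕ
  depth_root : depth root = 0
  depth_parent : ∀ t, t ≠ root → depth (parent t) + 1 = depth t

namespace ParentTree

section

variable {ι κ : Type*} (R : ParentTree ι)

def graph : SimpleGraph ι := SimpleGraph.fromRel fun s t => t ≠ R.root ∧ R.parent t = s

lemma graph_adj {s t : ι} :
    R.graph.Adj s t ↔
      (t ≠ R.root ∧ R.parent t = s) ∨ (s ≠ R.root ∧ R.parent s = t) := by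
  refine ⟨fun h => h.2, fun h => ⟨?_, h⟩⟩
  rintro rfl
  rcases h with ⟨ht, hp⟩ | ⟨ht, hp⟩ <;> have := R.depth_parent _ ht <;> simp_all

variable {R}

lemma depth_parent_lt {t : ι} (ht : t ≠ R.root) : R.depth (R.parent t) < R.depth t := by
  have := R.depth_parent t ht
  omega

lemma adj_parent {t : ι} (ht : t ≠ R.root) : R.graph.Adj (R.parent t) t :=
  R.graph_adj.2 (Or.inl ⟨ht, rfl⟩)

lemma eq_parent_of_adj {s t : ι} (h : R.graph.Adj s t) (hst : R.depth s ≤ R.depth t) :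
    t ≠ R.root ∧ R.parent t = s := by
  refine (R.graph_adj.1 h).resolve_right fun ⟨hs, hp⟩ => ?_
  have := R.depth_parent s hs
  rw [hp] at this
  omega

variable (R)

lemma reachable_root (t : ι) : R.graph.Reachable R.root t := by
  by_cases ht : t = R.root
  · rw [ht]
  · have := depth_parent_lt ht
    exact (reachable_root (R.parent t)).trans (adj_parent ht).reachable
termination_by R.depth t

lemma connected : R.graph.Connected :=
  (connected_iff_exists_forall_reachable _).2 ⟨R.root, R.reachable_root⟩

lemma isAcyclic : R.graph.IsAcyclic := by
  classical
  intro v c hc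
  -- Both cycle neighbours of a deepest vertex `m` of the cycle would be the parent of `m`.
  obtain ⟨m, hm, hmax⟩ := Set.exists_max_image {x | x ∈ c.support} R.depth
    (List.finite_toSet _) ⟨v, c.start_mem_support⟩
  have hc' : (c.rotate m hm).IsCycle := hc.rotate hm
  have hsupp : ∀ x ∈ (c.rotate m hm).support, R.depth x ≤ R.depth m := by
    intro x hx
    apply hmax
    rw [Walk.rotate, Walk.mem_support_append_iff] at hx
    exact hx.elim (fun h => c.support_dropUntil_subset_support hm h)
      (fun h => c.support_takeUntil_subset_support hm h)
  have hsnd := eq_parent_of_adj (Walk.adj_snd hc'.not_nil).symm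
    (hsupp _ (Walk.getVert_mem_support _ _))
  have hpen := eq_parent_of_adj (Walk.adj_penultimate hc'.not_nil)
    (hsupp _ (Walk.getVert_mem_support _ _))
  exact hc'.snd_ne_penultimate (hsnd.2.symm.trans hpen.2)

lemma isTree : R.graph.IsTree := ⟨R.connected, R.isAcyclic⟩

lemma dist_root_le_depth (t : ι) : R.graph.dist R.root t ≤ R.depth t := by
  by_cases ht : t = R.root
  · simp [ht]
  · have := depth_parent_lt ht
    calc R.graph.dist R.root t
        ≤ R.graph.dist R.root (R.parent t) + R.graph.dist (R.parent t) t :=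
          R.connected.dist_triangle
      _ ≤ R.depth (R.parent t) + 1 :=
          add_le_add (dist_root_le_depth _) (dist_eq_one_iff_adj.2 (adj_parent ht)).le
      _ = R.depth t := R.depth_parent t ht
termination_by R.depth t

@[simps]
def map (e : ι ≃ κ) : ParentTree κ where
  root := e R.root
  parent t := e (R.parent (e.symm t))
  depth t := R.depth (e.symm t)
  depth_root := by simpa using R.depth_root
  depth_parent t ht := by
    simpa using R.depth_parent (e.symm t) (fun h => ht (by simp [← h]))

/-- `X` is connected, with `top` its node nearest to the root. -/
def IsSubtreeAt (X : Set ι) (top : ι) : Prop :=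
  top ∈ X ∧ ∀ t ∈ X, t ≠ top → t ≠ R.root ∧ R.parent t ∈ X

variable {R} {X : Set ι} {top : ι}

lemma IsSubtreeAt.reachable (h : R.IsSubtreeAt X top) (t : ι) (ht : t ∈ X) :
    (R.graph.induce X).Reachable ⟨top, h.1⟩ ⟨t, ht⟩ := by
  by_cases htop : t = top
  · subst htop
    rfl
  · obtain ⟨hroot, hpar⟩ := h.2 t ht htop
    have := depth_parent_lt hroot
    exact (h.reachable _ hpar).trans (Adj.reachable (by simpa using adj_parent hroot))
termination_by R.depth t

lemma IsSubtreeAt.induce_connected (h : R.IsSubtreeAt X top) : (R.graph.induce X).Connected :=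
  (connected_iff_exists_forall_reachable _).2 ⟨_, fun ⟨t, ht⟩ => h.reachable t ht⟩

lemma IsSubtreeAt.map (h : R.IsSubtreeAt X top) (e : ι ≃ κ) :
    (R.map e).IsSubtreeAt (e.symm ⁻¹' X) (e top) := by
  refine ⟨by simpa using h.1, fun t ht htop => ?_⟩
  have := h.2 _ ht (fun h' => htop (by simp [← h']))
  exact ⟨fun h' => this.1 (by simp [h']), by simpa using this.2⟩

end

section Star

variable {κ : Type*} {ι : κ → Type*} (R : ∀ i, ParentTree (ι i))

open Classical in
noncomputable def star : ParentTree (Option (Σ i, ι i)) where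
  root := none
  parent
    | none => none
    | some ⟨i, t⟩ => if t = (R i).root then none else some ⟨i, (R i).parent t⟩
  depth
    | none => 0
    | some ⟨i, t⟩ => (R i).depth t + 1
  depth_root := rfl
  depth_parent
    | none, h => (h rfl).elim
    | some ⟨i, t⟩, _ => by
      by_cases ht : t = (R i).root
      · simp [ht, (R i).depth_root]
      · simp [ht, (R i).depth_parent t ht]

lemma star_parent_some_root {i : κ} : (star R).parent (some ⟨i, (R i).root⟩) = none := by
  simp [star]

lemma star_parent_some_of_ne_root {i : κ} {t : ι i} (ht : t ≠ (R i).root) :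
    (star R).parent (some ⟨i, t⟩) = some ⟨i, (R i).parent t⟩ := by
  simp [star, ht]

lemma star_depth_le {d : ℕ} (hd : ∀ i t, (R i).depth t < d) (t : Option (Σ i, ι i)) :
    (star R).depth t ≤ d := by
  rcases t with _ | ⟨i, t⟩
  · exact Nat.zero_le d
  · exact hd i t

end Star

end ParentTree

namespace SimpleGraph

variable {V : Type} {T : SimpleGraph V} {P Q S B R A : Set V} {u v w c : V}

lemma Walk.IsPath.length_eq_dist {p : T.Walk u v} (hp : p.IsPath) (hT : T.IsAcyclic) :
    p.length = T.dist u v := by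
  obtain ⟨q, hq, hlen⟩ := p.reachable.exists_path_of_dist
  have : p = q := congrArg Subtype.val ((hT.subsingleton_path u v).elim ⟨p, hp⟩ ⟨q, hq⟩)
  rw [this, hlen]

def ReachIn (T : SimpleGraph V) (P : Set V) (u v : V) : Prop :=
  ∃ p : T.Walk u v, ∀ x ∈ p.support, x ∈ P

namespace ReachIn

lemma mem_right (h : T.ReachIn P u v) : v ∈ P :=
  let ⟨p, hp⟩ := h; hp v p.end_mem_support

lemma refl (hu : u ∈ P) : T.ReachIn P u u := ⟨.nil, by simpa⟩

lemma symm (h : T.ReachIn P u v) : T.ReachIn P v u :=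
  let ⟨p, hp⟩ := h; ⟨p.reverse, by simpa using hp⟩

lemma trans (h : T.ReachIn P u v) (h' : T.ReachIn P v w) : T.ReachIn P u w := by
  obtain ⟨p, hp⟩ := h
  obtain ⟨q, hq⟩ := h'
  exact ⟨p.append q, fun x hx => (Walk.mem_support_append_iff ..).1 hx |>.elim (hp x) (hq x)⟩

lemma mono (hPQ : P ⊆ Q) (h : T.ReachIn P u v) : T.ReachIn Q u v :=
  let ⟨p, hp⟩ := h; ⟨p, fun x hx => hPQ (hp x hx)⟩

lemma of_adj (h : T.Adj u v) (hu : u ∈ P) (hv : v ∈ P) : T.ReachIn P u v :=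
  ⟨h.toWalk, by simp [hu, hv]⟩

end ReachIn

def componentIn (T : SimpleGraph V) (P : Set V) (v : V) : Set V := {w | T.ReachIn P v w}

def components (T : SimpleGraph V) (P : Set V) : Set (Set V) := T.componentIn P '' P

def boundary (T : SimpleGraph V) (A : Set V) : Set V := {v | v ∉ A ∧ ∃ u ∈ A, T.Adj u v}

lemma componentIn_subset : T.componentIn P v ⊆ P := fun _ h => h.mem_right

lemma componentIn_mono (hPQ : P ⊆ Q) : T.componentIn P v ⊆ T.componentIn Q v :=
  fun _ h => h.mono hPQ

lemma mem_componentIn_self (hv : v ∈ P) : v ∈ T.componentIn P v := ReachIn.refl hv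

lemma componentIn_eq (hw : w ∈ T.componentIn P v) : T.componentIn P w = T.componentIn P v :=
  Set.ext fun _ => ⟨hw.trans, hw.symm.trans⟩

lemma ReachIn.reachIn_componentIn (h : T.ReachIn P v w) :
    T.ReachIn (T.componentIn P v) v w := by
  classical
  obtain ⟨p, hp⟩ := h
  exact ⟨p, fun x hx => ⟨p.takeUntil x hx,
    fun y hy => hp y (p.support_takeUntil_subset_support hx hy)⟩⟩

lemma boundary_componentIn_subset (hc : c ∉ P) :
    T.boundary (T.componentIn P v) ⊆ insert c (T.componentIn {c}ᶜ v) := by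
  have hP : P ⊆ {c}ᶜ := fun x hx hxc => hc (hxc ▸ hx)
  rintro x ⟨-, u, hu, hux⟩
  by_cases hxc : x = c
  · exact Or.inl hxc
  · exact Or.inr ((hu.mono hP).trans (.of_adj hux (hP hu.mem_right) hxc))

lemma subset_of_mem_components {C : Set V} (hC : C ∈ T.components P) : C ⊆ P := by
  obtain ⟨v, -, rfl⟩ := hC
  exact componentIn_subset

lemma subset_iUnion_components : P ⊆ ⋃ C : T.components P, (C : Set V) :=
  fun v hv => Set.mem_iUnion.2 ⟨⟨_, v, hv, rfl⟩, mem_componentIn_self hv⟩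

lemma pairwise_disjoint_components :
    Pairwise fun C C' : T.components P ↦ Disjoint (C : Set V) C' := by
  intro C C' hne
  obtain ⟨v, -, hv⟩ := C.2
  obtain ⟨v', -, hv'⟩ := C'.2
  refine Set.disjoint_left.2 fun x hx hx' => hne (Subtype.ext ?_)
  rw [← hv] at hx ⊢
  rw [← hv'] at hx' ⊢
  exact (componentIn_eq hx).symm.trans (componentIn_eq hx')

structure IsRegion (T : SimpleGraph V) (S B : Set V) : Prop where
  boundary_subset : T.boundary S ⊆ B
  reachIn : ∀ u ∈ S ∪ B, ∀ v ∈ S ∪ B, T.ReachIn (S ∪ B) u v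

lemma isRegion_compl (hT : T.Connected) (B : Set V) : T.IsRegion Bᶜ B where
  boundary_subset _ hx := not_not.1 hx.1
  reachIn u _ v _ := ⟨(hT u v).some, by simp⟩

lemma isRegion_of_mem_components {C : Set V} (hC : C ∈ T.components P) :
    T.IsRegion C (T.boundary C) := by
  obtain ⟨v, -, rfl⟩ := hC
  have reach : ∀ y ∈ T.componentIn P v ∪ T.boundary (T.componentIn P v),
      T.ReachIn (T.componentIn P v ∪ T.boundary (T.componentIn P v)) v y := by
    rintro y (hy | hy)
    · exact hy.reachIn_componentIn.mono Set.subset_union_left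
    · obtain ⟨hy', u, hu, huy⟩ := hy
      exact (hu.reachIn_componentIn.mono Set.subset_union_left).trans
        (.of_adj huy (Or.inl hu) (Or.inr ⟨hy', u, hu, huy⟩))
  exact ⟨subset_rfl, fun x hx y hy => (reach x hx).symm.trans (reach y hy)⟩

lemma IsRegion.boundary_subset_of_mem_components (hreg : T.IsRegion S B) (hBR : B ⊆ R)
    {C : Set V} (hC : C ∈ T.components (S \ R)) : T.boundary C ⊆ R := by
  obtain ⟨v, -, rfl⟩ := hC
  rintro x ⟨hx, u, hu, hux⟩
  by_contra hxR
  have hxS : x ∈ S := by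
    by_contra hxS
    exact hxR (hBR (hreg.boundary_subset ⟨hxS, u, (componentIn_subset hu).1, hux⟩))
  exact hx (hu.trans (.of_adj hux (componentIn_subset hu) ⟨hxS, hxR⟩))

def IsCentroid (T : SimpleGraph V) (A : Set V) (c : V) : Prop :=
  ∀ v ≠ c, 2 * (T.componentIn {c}ᶜ v ∩ A).ncard ≤ A.ncard

lemma IsRegion.mem_of_isCentroid [Finite V] (hreg : T.IsRegion S B) (hc : T.IsCentroid A c)
    (hA : A ⊆ S ∪ B) (hA0 : A.Nonempty) : c ∈ S ∪ B := by
  by_contra hcSB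
  obtain ⟨a, ha⟩ := hA0
  have hsub : A ⊆ T.componentIn {c}ᶜ a ∩ A := fun x hx =>
    ⟨(hreg.reachIn a (hA ha) x (hA hx)).mono fun y hy hyc => hcSB (hyc ▸ hy), hx⟩
  have h1 := hc a fun h => hcSB (h ▸ hA ha)
  have h2 := Set.ncard_le_ncard hsub
  have h3 := (Set.ncard_pos A.toFinite).2 ⟨a, ha⟩
  omega

lemma IsTree.exists_adj_reachIn_compl (hT : T.IsTree) (hv : v ≠ c) :
    ∃ c', T.Adj c c' ∧ T.ReachIn {c}ᶜ c' v := by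
  obtain ⟨p, hp, -⟩ := hT.connected.exists_path_of_dist c v
  obtain ⟨c', hadj, q, rfl⟩ := p.exists_eq_cons_of_ne hv.symm
  have hc := (Walk.cons_isPath_iff _ _).1 hp
  exact ⟨c', hadj, q, fun x hx hxc => hc.2 (hxc ▸ hx)⟩

lemma IsTree.dist_eq_add_one_of_reachIn {c' x : V} (hT : T.IsTree) (hadj : T.Adj c c')
    (h : T.ReachIn {c}ᶜ c' x) : T.dist c x = T.dist c' x + 1 := by
  classical
  obtain ⟨p, hp⟩ := h
  have hc : c ∉ p.bypass.support := fun hc => hp c (p.support_bypass_subset_support hc) rfl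
  rw [← (p.bypass_isPath.cons (h := hadj) hc).length_eq_dist hT.isAcyclic,
    ← p.bypass_isPath.length_eq_dist hT.isAcyclic, Walk.length_cons]

theorem IsTree.exists_isCentroid [Fintype V] (hT : T.IsTree) (A : Set V) :
    ∃ c, T.IsCentroid A c := by
  classical
  obtain ⟨c, -, hmin⟩ := Finset.exists_min_image Finset.univ
    (fun c => ∑ x ∈ A.toFinset, T.dist c x) (Finset.univ_nonempty_iff.2 hT.connected.nonempty)
  refine ⟨c, fun v hv => ?_⟩
  obtain ⟨c', hadj, hc'v⟩ := hT.exists_adj_reachIn_compl hv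
  set K := T.componentIn {c}ᶜ v
  -- Moving from `c` to `c'` brings `K` one step closer and the rest at most one step farther.
  have key (x : V) :
      T.dist c' x + (if x ∈ K then 1 else 0) ≤ T.dist c x + (if x ∉ K then 1 else 0) := by
    split_ifs with hx
    · exact (hT.dist_eq_add_one_of_reachIn hadj (hc'v.trans hx)).ge
    · calc T.dist c' x ≤ T.dist c' c + T.dist c x := hT.connected.dist_triangle
        _ = T.dist c x + 1 := by rw [dist_eq_one_iff_adj.2 hadj.symm, add_comm]
  have hsum := Finset.sum_le_sum fun x (_ : x ∈ A.toFinset) => key x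
  simp only [Finset.sum_add_distrib, Finset.sum_boole, Nat.cast_id] at hsum
  have hcard := Finset.card_filter_add_card_filter_not (s := A.toFinset) (· ∈ K)
  have hKA : (K ∩ A).ncard = (A.toFinset.filter (· ∈ K)).card := by
    rw [← Set.ncard_coe_finset]
    congr 1
    ext
    simp [and_comm]
  have := hmin c' (Finset.mem_univ _)
  rw [hKA, Set.ncard_eq_toFinset_card']
  omega

/-- A decomposition of `T[S ∪ B]` to be hung below a bag containing `B`. -/
structure RootedDecomp (T : SimpleGraph V) (S B : Set V) where
  ι : Type
  [finite : Finite ι]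
  tree : ParentTree ι
  bag : ι → Set V
  subset_bag_root : B ⊆ bag tree.root
  ncard_bag_root_diff_le : (bag tree.root \ B).ncard ≤ 1
  ncard_bag_le (t : ι) : (bag t).ncard ≤ 4
  ncard_inter_bag_parent_le (t : ι) :
    t ≠ tree.root → (bag t ∩ bag (tree.parent t)).ncard ≤ 3
  bag_subset (t : ι) : bag t ⊆ S ∪ B
  exists_isSubtreeAt (v : V) : v ∈ S ∪ B → ∃ top, tree.IsSubtreeAt {t | v ∈ bag t} top
  exists_mem_bag_of_adj ⦃u v : V⦄ :
    T.Adj u v → u ∈ S ∪ B → v ∈ S ∪ B → ∃ t, u ∈ bag t ∧ v ∈ bag t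

attribute [instance] RootedDecomp.finite

def HasRootedDecomp (T : SimpleGraph V) (S B : Set V) (d : ℕ) : Prop :=
  ∃ D : T.RootedDecomp S B, ∀ t, D.tree.depth t ≤ d

lemma HasRootedDecomp.mono {d d' : ℕ} (h : T.HasRootedDecomp S B d) (hd : d ≤ d') :
    T.HasRootedDecomp S B d' :=
  let ⟨D, hD⟩ := h; ⟨D, fun t => (hD t).trans hd⟩

namespace RootedDecomp

section

variable (D : T.RootedDecomp S B)

lemma eq_root_of_isSubtreeAt (hv : v ∈ B) {top : D.ι}
    (h : D.tree.IsSubtreeAt {t | v ∈ D.bag t} top) : top = D.tree.root := by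
  by_contra hne
  exact (h.2 _ (D.subset_bag_root hv) (Ne.symm hne)).1 rfl

lemma ncard_inter_le_of_adj {t u : D.ι} (h : D.tree.graph.Adj t u) :
    (D.bag t ∩ D.bag u).ncard ≤ 3 := by
  rcases D.tree.graph_adj.1 h with ⟨hu, rfl⟩ | ⟨ht, rfl⟩
  · rw [Set.inter_comm]
    exact D.ncard_inter_bag_parent_le u hu
  · exact D.ncard_inter_bag_parent_le t ht

lemma isTreeDecomp (hSB : S ∪ B = Set.univ) : IsTreeDecomp T D.tree.graph D.bag := by
  refine ⟨D.tree.isTree, fun v => ?_,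
    fun u v h => D.exists_mem_bag_of_adj h (by simp [hSB]) (by simp [hSB])⟩
  obtain ⟨top, htop⟩ := D.exists_isSubtreeAt v (by simp [hSB])
  exact ⟨⟨top, htop.1⟩, htop.induce_connected⟩

def map {κ : Type} (e : D.ι ≃ κ) : T.RootedDecomp S B where
  ι := κ
  finite := .of_equiv _ e
  tree := D.tree.map e
  bag t := D.bag (e.symm t)
  subset_bag_root := by simpa using D.subset_bag_root
  ncard_bag_root_diff_le := by simpa using D.ncard_bag_root_diff_le
  ncard_bag_le t := D.ncard_bag_le _
  ncard_inter_bag_parent_le t ht := by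
    simpa using D.ncard_inter_bag_parent_le (e.symm t) fun h => ht (by simp [← h])
  bag_subset t := D.bag_subset _
  exists_isSubtreeAt v hv :=
    let ⟨top, h⟩ := D.exists_isSubtreeAt v hv
    ⟨e top, h.map e⟩
  exists_mem_bag_of_adj u v h hu hv :=
    let ⟨t, ht⟩ := D.exists_mem_bag_of_adj h hu hv
    ⟨e t, by simpa using ht⟩

end

section Glue

variable {κ : Type} {C : κ → Set V} (D : ∀ i, T.RootedDecomp (C i) (T.boundary (C i)))

def glueBag (R : Set V) : Option (Σ i, (D i).ι) → Set V
  | none => R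
  | some ⟨i, t⟩ => (D i).bag t

lemma exists_isSubtreeAt_glueBag (hBR : B ⊆ R) (hCS : ∀ i, C i ⊆ S \ R)
    (hcover : S \ R ⊆ ⋃ i, C i) (hdisj : Pairwise fun i j => Disjoint (C i) (C j))
    (hbd : ∀ i, T.boundary (C i) ⊆ R) (hv : v ∈ S ∪ B) :
    ∃ top, (ParentTree.star fun i => (D i).tree).IsSubtreeAt {t | v ∈ glueBag D R t} top := by
  by_cases hvR : v ∈ R
  · refine ⟨none, hvR, ?_⟩
    rintro (_ | ⟨i, t⟩) ht hne
    · exact (hne rfl).elim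
    have hvi : v ∈ T.boundary (C i) :=
      ((D i).bag_subset t ht).resolve_left fun h => (hCS i h).2 hvR
    obtain ⟨top, htop⟩ := (D i).exists_isSubtreeAt v (Or.inr hvi)
    obtain rfl := (D i).eq_root_of_isSubtreeAt hvi htop
    refine ⟨Option.some_ne_none _, ?_⟩
    by_cases hroot : t = (D i).tree.root
    · subst hroot
      rw [ParentTree.star_parent_some_root]
      exact hvR
    · rw [ParentTree.star_parent_some_of_ne_root (fun i => (D i).tree) hroot]
      exact (htop.2 t ht hroot).2
  · obtain ⟨i, hvi⟩ :=
      Set.mem_iUnion.1 (hcover ⟨hv.resolve_right fun h => hvR (hBR h), hvR⟩)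
    obtain ⟨top, htop⟩ := (D i).exists_isSubtreeAt v (Or.inl hvi)
    refine ⟨some ⟨i, top⟩, htop.1, ?_⟩
    rintro (_ | ⟨j, t⟩) ht hne
    · exact (hvR ht).elim
    obtain rfl : j = i := by
      by_contra hji
      have hvj : v ∈ C j := ((D j).bag_subset t ht).resolve_right fun h => hvR (hbd j h)
      exact Set.disjoint_left.1 (hdisj hji) hvj hvi
    obtain ⟨hroot, hpar⟩ := htop.2 t ht fun h => hne (h ▸ rfl)
    refine ⟨Option.some_ne_none _, ?_⟩
    rw [ParentTree.star_parent_some_of_ne_root (fun i => (D i).tree) hroot]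
    exact hpar

lemma exists_mem_glueBag_of_adj (hBR : B ⊆ R) (hcover : S \ R ⊆ ⋃ i, C i)
    (huv : T.Adj u v) (hu : u ∈ S ∪ B) (huR : u ∉ R) :
    ∃ t, u ∈ glueBag D R t ∧ v ∈ glueBag D R t := by
  obtain ⟨i, hui⟩ := Set.mem_iUnion.1 (hcover ⟨hu.resolve_right fun h => huR (hBR h), huR⟩)
  have hv : v ∈ C i ∪ T.boundary (C i) := by
    by_cases hvi : v ∈ C i
    exacts [Or.inl hvi, Or.inr ⟨hvi, u, hui, huv⟩]
  obtain ⟨t, ht⟩ := (D i).exists_mem_bag_of_adj huv (Or.inl hui) hv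
  exact ⟨some ⟨i, t⟩, ht⟩

variable [Finite κ] [Finite V]

noncomputable def glue (hBR : B ⊆ R) (hRS : R ⊆ S ∪ B) (hR : R.ncard ≤ 4)
    (hRB : (R \ B).ncard ≤ 1) (hCS : ∀ i, C i ⊆ S \ R) (hcover : S \ R ⊆ ⋃ i, C i)
    (hdisj : Pairwise fun i j => Disjoint (C i) (C j)) (hbd : ∀ i, T.boundary (C i) ⊆ R)
    (hbd3 : ∀ i, (T.boundary (C i)).ncard ≤ 3) : T.RootedDecomp S B where
  ι := Option (Σ i, (D i).ι)
  tree := ParentTree.star fun i => (D i).tree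
  bag := glueBag D R
  subset_bag_root := hBR
  ncard_bag_root_diff_le := hRB
  ncard_bag_le
    | none => hR
    | some ⟨i, t⟩ => (D i).ncard_bag_le t
  ncard_inter_bag_parent_le
    | none, h => (h rfl).elim
    | some ⟨i, t⟩, _ => by
      by_cases ht : t = (D i).tree.root
      · subst ht
        rw [ParentTree.star_parent_some_root]
        refine (Set.ncard_le_ncard fun x hx => ?_).trans (hbd3 i)
        exact ((D i).bag_subset _ hx.1).resolve_left fun h => (hCS i h).2 hx.2
      · rw [ParentTree.star_parent_some_of_ne_root (fun i => (D i).tree) ht]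
        exact (D i).ncard_inter_bag_parent_le t ht
  bag_subset
    | none => hRS
    | some ⟨i, t⟩ => ((D i).bag_subset t).trans <| Set.union_subset
        ((hCS i).trans (Set.sdiff_subset.trans Set.subset_union_left)) ((hbd i).trans hRS)
  exists_isSubtreeAt _ hv := exists_isSubtreeAt_glueBag D hBR hCS hcover hdisj hbd hv
  exists_mem_bag_of_adj u v huv hu hv := by
    by_cases huR : u ∈ R
    · by_cases hvR : v ∈ R
      · exact ⟨none, huR, hvR⟩
      · obtain ⟨t, hv', hu'⟩ := exists_mem_glueBag_of_adj D hBR hcover huv.symm hv hvR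
        exact ⟨t, hu', hv'⟩
    · exact exists_mem_glueBag_of_adj D hBR hcover huv hu huR

end Glue

end RootedDecomp

theorem hasRootedDecomp_zero_of_ncard_le_one [Finite V] (hS : S.ncard ≤ 1) (hB : B.ncard ≤ 3) :
    T.HasRootedDecomp S B 0 := by
  have hSB : S \ (S ∪ B) = ∅ := Set.sdiff_eq_empty.2 Set.subset_union_left
  -- the single bag `S ∪ B`, glued with no children
  refine ⟨RootedDecomp.glue (C := Empty.elim) (R := S ∪ B) (fun i => i.elim)
    Set.subset_union_right subset_rfl ((Set.ncard_union_le S B).trans (by omega))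
    ((Set.ncard_le_ncard (by simp)).trans hS) (fun i => i.elim) (by simp [hSB])
    (fun i => i.elim) (fun i => i.elim) (fun i => i.elim),
    ParentTree.star_depth_le _ fun i => i.elim⟩

theorem IsRegion.hasRootedDecomp_of_components [Finite V] (hreg : T.IsRegion S B)
    (hc : c ∈ S ∪ B) (hB : B.ncard ≤ 3) {d : ℕ}
    (hchild : ∀ C ∈ T.components (S \ insert c B),
      (T.boundary C).ncard ≤ 3 ∧ ∃ δ < d, T.HasRootedDecomp C (T.boundary C) δ) :
    T.HasRootedDecomp S B d := by
  choose hbd3 δ hδ D hD using hchild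
  have hBc := Set.subset_insert c B
  exact ⟨RootedDecomp.glue (C := Subtype.val)
    (fun C : T.components (S \ insert c B) => D C C.2) hBc
    (Set.insert_subset hc Set.subset_union_right) ((Set.ncard_insert_le c B).trans (by omega))
    ((Set.ncard_le_ncard fun x hx => hx.1.resolve_right hx.2).trans (Set.ncard_singleton c).le)
    (fun C => subset_of_mem_components C.2) subset_iUnion_components
    pairwise_disjoint_components (fun C => hreg.boundary_subset_of_mem_components hBc C.2)
    (fun C => hbd3 C C.2),
    ParentTree.star_depth_le _ fun C t => (hD C C.2 t).trans_lt (hδ C C.2)⟩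

theorem IsRegion.hasRootedDecomp_of_ncard_le_three [Fintype V] (hT : T.IsTree) {s : ℕ}
    (hQ : ∀ S B, T.IsRegion S B → B.ncard ≤ 2 → S.ncard ≤ s →
      T.HasRootedDecomp S B (2 * Nat.log 2 s - 1))
    (hreg : T.IsRegion S B) (hB : B.ncard ≤ 3) (hS : S.ncard ≤ s) :
    T.HasRootedDecomp S B (2 * Nat.log 2 s) := by
  rcases le_or_gt S.ncard 1 with hS1 | hS1
  · exact (hasRootedDecomp_zero_of_ncard_le_one hS1 hB).mono (Nat.zero_le _)
  rcases le_or_gt B.ncard 2 with hB2 | hB2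
  · exact (hQ S B hreg hB2 hS).mono (Nat.sub_le _ _)
  have hlog : 1 ≤ Nat.log 2 s := Nat.le_log_of_pow_le one_lt_two (by omega)
  obtain ⟨c, hc⟩ := hT.exists_isCentroid B
  have hcSB := hreg.mem_of_isCentroid hc Set.subset_union_right
    (Set.nonempty_of_ncard_ne_zero (by omega))
  refine hreg.hasRootedDecomp_of_components hcSB (by omega) ?_
  rintro _ ⟨v, hv, rfl⟩
  set C := T.componentIn (S \ insert c B) v
  have hbd : T.boundary C ⊆ insert c (T.componentIn {c}ᶜ v ∩ B) := fun x hx =>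
    match hreg.boundary_subset_of_mem_components (Set.subset_insert c B) ⟨v, hv, rfl⟩ hx,
      boundary_componentIn_subset (fun h => h.2 (Set.mem_insert c B)) hx with
    | .inl h, _ | _, .inl h => .inl h
    | .inr hB, .inr hK => .inr ⟨hK, hB⟩
  have hbd2 : (T.boundary C).ncard ≤ 2 := by
    have := hc v fun h => hv.2 (h ▸ Set.mem_insert c B)
    have := Set.ncard_insert_le c (T.componentIn {c}ᶜ v ∩ B)
    have := Set.ncard_le_ncard hbd
    omega
  refine ⟨by omega, _, by omega, hQ _ _ (isRegion_of_mem_components ⟨v, hv, rfl⟩) hbd2 ?_⟩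
  exact (Set.ncard_le_ncard (componentIn_subset.trans Set.sdiff_subset)).trans hS

theorem IsRegion.hasRootedDecomp_of_ncard_le_two [Fintype V] (hT : T.IsTree) {s : ℕ}
    (hs : 2 ≤ s)
    (hP : ∀ S B, T.IsRegion S B → B.ncard ≤ 3 → S.ncard ≤ s / 2 →
      T.HasRootedDecomp S B (2 * Nat.log 2 (s / 2)))
    (hreg : T.IsRegion S B) (hB : B.ncard ≤ 2) (hS : S.ncard ≤ s) :
    T.HasRootedDecomp S B (2 * Nat.log 2 s - 1) := by
  rcases le_or_gt S.ncard 1 with hS1 | hS1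
  · exact (hasRootedDecomp_zero_of_ncard_le_one hS1 (by omega)).mono (Nat.zero_le _)
  have hlog : 1 ≤ Nat.log 2 s := Nat.le_log_of_pow_le one_lt_two (by omega)
  obtain ⟨c, hc⟩ := hT.exists_isCentroid S
  have hcSB := hreg.mem_of_isCentroid hc Set.subset_union_left
    (Set.nonempty_of_ncard_ne_zero (by omega))
  refine hreg.hasRootedDecomp_of_components hcSB (by omega) ?_
  rintro _ ⟨v, hv, rfl⟩
  set C := T.componentIn (S \ insert c B) v
  have hhalf : C.ncard ≤ s / 2 := by
    have hSc : S \ insert c B ⊆ {c}ᶜ := fun y hy hyc => hy.2 (hyc ▸ Set.mem_insert c B)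
    have hsub : C ⊆ T.componentIn {c}ᶜ v ∩ S := fun x hx =>
      ⟨componentIn_mono hSc hx, (componentIn_subset hx).1⟩
    have := hc v fun h => hv.2 (h ▸ Set.mem_insert c B)
    have := Set.ncard_le_ncard hsub
    omega
  have hbd3 : (T.boundary C).ncard ≤ 3 :=
    (Set.ncard_le_ncard (hreg.boundary_subset_of_mem_components (Set.subset_insert c B)
      ⟨v, hv, rfl⟩)).trans ((Set.ncard_insert_le c B).trans (by omega))
  refine ⟨hbd3, _, ?_, hP _ _ (isRegion_of_mem_components ⟨v, hv, rfl⟩) hbd3 hhalf⟩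
  rw [Nat.log_div_base]
  omega

theorem IsTree.hasRootedDecomp_of_ncard_le_two [Fintype V] (hT : T.IsTree) (s : ℕ) :
    ∀ S B, T.IsRegion S B → B.ncard ≤ 2 → S.ncard ≤ s →
      T.HasRootedDecomp S B (2 * Nat.log 2 s - 1) := by
  induction s using Nat.strong_induction_on with
  | _ s ih =>
    intro S B hreg hB hS
    rcases lt_or_ge s 2 with hs | hs
    · exact (hasRootedDecomp_zero_of_ncard_le_one (by omega) (by omega)).mono (Nat.zero_le _)
    · exact hreg.hasRootedDecomp_of_ncard_le_two hT hs
        (fun _ _ hreg' => hreg'.hasRootedDecomp_of_ncard_le_three hT (ih (s / 2) (by omega)))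
        hB hS

theorem IsTree.hasRootedDecomp [Fintype V] (hT : T.IsTree) (hreg : T.IsRegion S B)
    (hB : B.ncard ≤ 3) : T.HasRootedDecomp S B (2 * Nat.log 2 S.ncard) :=
  hreg.hasRootedDecomp_of_ncard_le_three hT (hT.hasRootedDecomp_of_ncard_le_two _) hB le_rfl

end SimpleGraph

/-- **Logarithmic-height decompositions of trees.** For every finite tree `T`
and every set `B` of at most three vertices, there is a rooted tree
decomposition of `T` of height at most `2 log₂ |T|`, width at most 3 and
adhesion at most 3, whose root bag contains `B` and at most one further
vertex. -/
theorem tree_log_decomposition {V : Type} [Fintype V] (T : SimpleGraph V)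
    (hT : T.IsTree) (B : Set V) (hB : B.ncard ≤ 3) :
    ∃ (n : ℕ) (T' : SimpleGraph (Fin n)) (r : Fin n) (β : Fin n → Set V),
      IsTreeDecomp T T' β ∧
      B ⊆ β r ∧ (β r \ B).ncard ≤ 1 ∧
      (∀ t : Fin n, (T'.dist r t : ℝ) ≤ 2 * Real.logb 2 (Fintype.card V)) ∧
      (∀ t : Fin n, (β t).ncard ≤ 4) ∧
      (∀ ⦃t u : Fin n⦄, T'.Adj t u → (β t ∩ β u).ncard ≤ 3) := by
  obtain ⟨D, hD⟩ := hT.hasRootedDecomp (isRegion_compl hT.connected B) hB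
  obtain ⟨n, ⟨e⟩⟩ := Finite.exists_equiv_fin D.ι
  let D' := D.map e
  refine ⟨n, D'.tree.graph, D'.tree.root, D'.bag, D'.isTreeDecomp (Set.compl_union_self B),
    D'.subset_bag_root, D'.ncard_bag_root_diff_le, fun t => ?_, D'.ncard_bag_le,
    fun t u h => D'.ncard_inter_le_of_adj h⟩
  have hcard : Bᶜ.ncard ≤ Fintype.card V := by
    rw [← Nat.card_eq_fintype_card, ← Set.ncard_univ]
    exact Set.ncard_le_ncard (Set.subset_univ _)
  calc (D'.tree.graph.dist D'.tree.root t : ℝ)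
      ≤ (2 * Nat.log 2 (Fintype.card V) : ℕ) := by
        exact_mod_cast ((D'.tree.dist_root_le_depth t).trans (hD _)).trans
          (Nat.mul_le_mul_left 2 (Nat.log_mono_right hcard))
    _ ≤ 2 * Real.logb 2 (Fintype.card V) := by
        push_cast
        gcongr
        exact Real.natLog_le_logb _ _
end
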